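/- arXiv:math/0505249 — 7 statements merged into one kernel-verified Lean document; each statement's English description precedes it below -/
import Mathlib

section
/- Let $r:(0,\xi)\to(0,\infty)$ be continuous, positive, monotone on a neighborhood of $0+$ and on a neighborhood of $\xi-$, with $\lim_{t\to0+}r(t)=+\infty$, and suppose $\int_0^\xi r(s)\,ds < \infty$. If $w:(0,\xi)\to(0,\infty)$ is differentiable, solves $w' - w^2 = -q r^2$ for some $q>0$, and satisfies $w(t)\to 0$ as $t\to\xi-$, then there exist neighborhoods of $0+$ and $\xi-$ on which $w < \sqrt{q}\,r$, and consequently $\int_0^\xi w(s)\,ds < \infty$. -/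
/-!
If `√q r(t₀) ≤ w(t₀)` and `r` is nonincreasing on `[t₀, t₁]`, then `w' = w² - q r² ≥ w² - w(t₀)²`
there, and a Grönwall comparison keeps `w ≥ w(t₀)` on the whole interval. Since `r → ∞` at `0+`,
`r` decreases near `0`, so a point `t₀` close to `0` with `w(t₀) ≥ √q r(t₀)` would force
`w(x) ≥ √q r(t₀) → ∞` at a fixed `x`. Near `ξ`, either `r` increases and `w → 0` falls below
`√q r`, or `r` decreases and such a `t₀` would keep `w` away from `0`. Finally `w ≤ √q r` near
both ends, and `w` is continuous in between, so `w` is integrable.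
-/

open MeasureTheory Filter Set Topology

theorem le_of_sq_sub_sq_le_deriv {w w' : ℝ → ℝ} {a b c : ℝ} (hw : ContinuousOn w (Icc a b))
    (hw' : ∀ t ∈ Ico a b, HasDerivWithinAt w (w' t) (Ici t) t)
    (hbound : ∀ t ∈ Ico a b, w t ^ 2 - c ^ 2 ≤ w' t) (ha : c ≤ w a) :
    ∀ t ∈ Icc a b, c ≤ w t := by
  intro x hx
  -- `(c - w)' ≤ c² - w² = 2c (c - w) - (c - w)²`, so Grönwall applies to `c - w` with `K = 2c`.
  have := le_gronwallBound_of_liminf_deriv_right_le (f := fun t => c - w t) (f' := fun t => -w' t)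
    (K := 2 * c) (δ := 0) (ε := 0) (continuousOn_const.sub hw)
    (fun t ht _ hr => ((hw' t ht).const_sub c).liminf_right_slope_le hr) (by simpa using ha)
    (fun t ht => by nlinarith [hbound t ht, sq_nonneg (c - w t)]) x hx
  simpa [gronwallBound_ε0_δ0] using this

theorem le_of_sqrt_mul_le_of_antitoneOn {I : Set ℝ} [I.OrdConnected] {q : ℝ} {r w : ℝ → ℝ}
    (hq : 0 ≤ q) (hw : ∀ t ∈ I, HasDerivAt w (w t ^ 2 - q * r t ^ 2) t) (hr : AntitoneOn r I)
    (hr0 : ∀ t ∈ I, 0 ≤ r t) {t₀ t₁ : ℝ} (ht₀ : t₀ ∈ I) (ht₁ : t₁ ∈ I) (h01 : t₀ ≤ t₁)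
    (hwt₀ : √q * r t₀ ≤ w t₀) : w t₀ ≤ w t₁ := by
  have hsub : Icc t₀ t₁ ⊆ I := Set.OrdConnected.out ‹_› ht₀ ht₁
  refine le_of_sq_sub_sq_le_deriv (w' := fun t => w t ^ 2 - q * r t ^ 2)
    (fun t ht => (hw t (hsub ht)).continuousAt.continuousWithinAt)
    (fun t ht => (hw t (hsub (Ico_subset_Icc_self ht))).hasDerivWithinAt) (fun t hts => ?_) le_rfl
    t₁ ⟨h01, le_rfl⟩
  have ht : t ∈ I := hsub (Ico_subset_Icc_self hts)
  have hrt : √q * r t ≤ w t₀ :=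
    (mul_le_mul_of_nonneg_left (hr ht₀ ht hts.1) (Real.sqrt_nonneg q)).trans hwt₀
  have hsq : q * r t ^ 2 ≤ w t₀ ^ 2 := by
    simpa [mul_pow, Real.sq_sqrt hq] using
      pow_le_pow_left₀ (mul_nonneg (Real.sqrt_nonneg q) (hr0 t ht)) hrt 2
  linarith

theorem MonotoneOn.not_tendsto_nhdsGT_atTop {a b : ℝ} {r : ℝ → ℝ} (hr : MonotoneOn r (Ioo a b))
    (hab : a < b) : ¬Tendsto r (𝓝[>] a) atTop := by
  intro h
  obtain ⟨x, hax, hxb⟩ := exists_between hab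
  obtain ⟨t, hrt, ht⟩ := ((h.eventually_gt_atTop (r x)).and (Ioo_mem_nhdsGT hax)).exists
  exact (hr ⟨ht.1, ht.2.trans hxb⟩ ⟨hax, hxb⟩ ht.2.le).not_gt hrt

theorem eventually_nhdsGT_lt_sqrt_mul {a q : ℝ} {s : Set ℝ} {r w : ℝ → ℝ} (hs : s ∈ 𝓝[>] a)
    (hq : 0 < q) (hw : ∀ t ∈ s, HasDerivAt w (w t ^ 2 - q * r t ^ 2) t)
    (hr : MonotoneOn r s ∨ AntitoneOn r s) (hr0 : ∀ t ∈ s, 0 ≤ r t)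
    (hr_top : Tendsto r (𝓝[>] a) atTop) : ∀ᶠ t in 𝓝[>] a, w t < √q * r t := by
  obtain ⟨b, hab : a < b, hbs⟩ := mem_nhdsGT_iff_exists_Ioo_subset.1 hs
  have hanti : AntitoneOn r (Ioo a b) :=
    hr.elim (fun hmono => absurd hr_top ((hmono.mono hbs).not_tendsto_nhdsGT_atTop hab))
      (·.mono hbs)
  obtain ⟨x, hax, hxb⟩ := exists_between hab
  filter_upwards [(hr_top.const_mul_atTop (Real.sqrt_pos.2 hq)).eventually_gt_atTop (w x),
    Ioo_mem_nhdsGT hax] with t hwx ht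
  by_contra! h
  have := le_of_sqrt_mul_le_of_antitoneOn hq.le (fun t ht => hw t (hbs ht)) hanti
    (fun t ht => hr0 t (hbs ht)) ⟨ht.1, ht.2.trans hxb⟩ ⟨hax, hxb⟩ ht.2.le h
  linarith

theorem eventually_lt_sqrt_mul_of_tendsto_zero {I : Set ℝ} [I.OrdConnected] {l : Filter ℝ}
    [l.NeBot] {q : ℝ} {r w : ℝ → ℝ} (hIl : I ∈ l) (hl : ∀ t₀ ∈ I, ∀ᶠ t in l, t₀ ≤ t)
    (hq : 0 < q) (hw : ∀ t ∈ I, HasDerivAt w (w t ^ 2 - q * r t ^ 2) t)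
    (hr : MonotoneOn r I ∨ AntitoneOn r I) (hr0 : ∀ t ∈ I, 0 < r t)
    (hw0 : Tendsto w l (𝓝 0)) : ∀ᶠ t in l, w t < √q * r t := by
  obtain ⟨x, hx⟩ := Filter.nonempty_of_mem hIl
  rcases hr with hmono | hanti
  · have hpos : 0 < √q * r x := mul_pos (Real.sqrt_pos.2 hq) (hr0 x hx)
    filter_upwards [hIl, hl x hx, hw0.eventually (gt_mem_nhds hpos)] with t ht hxt hwt
    exact hwt.trans_le (mul_le_mul_of_nonneg_left (hmono hx ht hxt) (Real.sqrt_nonneg q))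
  · filter_upwards [hIl] with t₀ ht₀
    by_contra! h
    have hpos : 0 < w t₀ := (mul_pos (Real.sqrt_pos.2 hq) (hr0 t₀ ht₀)).trans_le h
    obtain ⟨t, ht, h0t, hwt⟩ := (eventually_mem_set.2 hIl |>.and <|
      (hl t₀ ht₀).and <| hw0.eventually (gt_mem_nhds hpos)).exists
    exact hwt.not_ge <| le_of_sqrt_mul_le_of_antitoneOn hq.le hw hanti (fun t ht => (hr0 t ht).le)
      ht₀ ht h0t h

theorem EReal.hasBasis_comap_coe_nhdsLT {ξ : EReal} (hξ : ⊥ < ξ) :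
    (comap ((↑) : ℝ → EReal) (𝓝[<] ξ)).HasBasis (fun a : ℝ => (a : EReal) < ξ)
      (fun a => (↑) ⁻¹' Ioo (a : EReal) ξ) := by
  refine ((nhdsLT_basis_of_exists_lt ⟨⊥, hξ⟩).comap _).to_hasBasis (fun l hl => ?_)
    (fun a ha => ⟨a, ha, subset_rfl⟩)
  obtain ⟨a, hla, haξ⟩ := EReal.lt_iff_exists_real_btwn.1 hl
  exact ⟨a, haξ, preimage_mono (Ioo_subset_Ioo_left hla.le)⟩

theorem EReal.neBot_comap_coe_nhdsLT {ξ : EReal} (hξ : ⊥ < ξ) :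
    (comap ((↑) : ℝ → EReal) (𝓝[<] ξ)).NeBot :=
  (EReal.hasBasis_comap_coe_nhdsLT hξ).neBot_iff.2 fun ha => EReal.lt_iff_exists_real_btwn.1 ha

theorem eventually_comap_coe_nhdsLT_lt_sqrt_mul {ξ : EReal} {q : ℝ} {s : Set ℝ} {r w : ℝ → ℝ}
    (hξ : ⊥ < ξ) (hs : s ∈ comap ((↑) : ℝ → EReal) (𝓝[<] ξ)) (hq : 0 < q)
    (hw : ∀ t ∈ s, HasDerivAt w (w t ^ 2 - q * r t ^ 2) t)
    (hr : MonotoneOn r s ∨ AntitoneOn r s) (hr0 : ∀ t ∈ s, 0 < r t)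
    (hw0 : Tendsto w (comap ((↑) : ℝ → EReal) (𝓝[<] ξ)) (𝓝 0)) :
    ∀ᶠ t in comap ((↑) : ℝ → EReal) (𝓝[<] ξ), w t < √q * r t := by
  have hF := EReal.hasBasis_comap_coe_nhdsLT hξ
  have := EReal.neBot_comap_coe_nhdsLT hξ
  obtain ⟨c, hcξ, hcs⟩ := hF.mem_iff.1 hs
  have : (((↑) : ℝ → EReal) ⁻¹' Ioo (c : EReal) ξ).OrdConnected :=
    ordConnected_Ioo.preimage_mono EReal.coe_strictMono.monotone
  exact eventually_lt_sqrt_mul_of_tendsto_zero (hF.mem_of_mem hcξ)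
    (fun t₀ ht₀ => hF.eventually_iff.2 ⟨t₀, ht₀.2, fun t ht => (EReal.coe_lt_coe_iff.1 ht.1).le⟩)
    hq (fun t ht => hw t (hcs ht)) (hr.imp (·.mono hcs) (·.mono hcs)) (fun t ht => hr0 t (hcs ht))
    hw0

theorem ContinuousOn.integrableOn_of_norm_le_off_Icc {E : Type*} [NormedAddCommGroup E]
    {s : Set ℝ} {f : ℝ → E} {g : ℝ → ℝ} {a b : ℝ} (hf : ContinuousOn f s) (hs : MeasurableSet s)
    (hg : IntegrableOn g s) (hab : Icc a b ⊆ s) (hfg : ∀ t ∈ s, t < a ∨ b < t → ‖f t‖ ≤ g t) :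
    IntegrableOn f s := by
  have hm : MeasurableSet (s ∩ (Iio a ∪ Ioi b)) :=
    hs.inter (measurableSet_Iio.union measurableSet_Ioi)
  have hout : IntegrableOn f (s ∩ (Iio a ∪ Ioi b)) := by
    refine (hg.mono_set inter_subset_left).mono'
      ((hf.mono inter_subset_left).aestronglyMeasurable hm) ?_
    filter_upwards [ae_restrict_mem hm] with t ⟨hts, ht⟩ using hfg t hts ht
  refine (hout.union ((hf.mono hab).integrableOn_compact isCompact_Icc)).mono_set fun t ht => ?_
  by_cases h : t < a ∨ b < t
  · exact Or.inl ⟨ht, h⟩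
  · simp only [not_or, not_lt] at h
    exact Or.inr h

theorem stmt_4_general (ξ : EReal) (hξ : 0 < ξ) (q : ℝ) (hq : 0 < q) (r w : ℝ → ℝ)
    (S : Set ℝ) (hSdef : S = {t : ℝ | 0 < t ∧ (t : EReal) < ξ})
    (hrpos : ∀ t ∈ S, 0 < r t)
    (hrmono0 : ∃ ε > (0:ℝ), MonotoneOn r (S ∩ Set.Iio ε) ∨ AntitoneOn r (S ∩ Set.Iio ε))
    (hrmonoξ : ∃ A ∈ Filter.comap (fun t : ℝ => (t : EReal)) (nhdsWithin ξ (Set.Iio ξ)),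
      MonotoneOn r (S ∩ A) ∨ AntitoneOn r (S ∩ A))
    (hr0 : Tendsto r (nhdsWithin 0 (Set.Ioi 0)) atTop)
    (hrint : IntegrableOn r S)
    (hwpos : ∀ t ∈ S, 0 < w t)
    (hwode : ∀ t ∈ S, HasDerivAt w (w t ^ 2 - q * r t ^ 2) t)
    (hwξ : Tendsto w (Filter.comap (fun t : ℝ => (t : EReal)) (nhdsWithin ξ (Set.Iio ξ)))
      (nhds 0)) :
    (∃ ε > (0:ℝ), ∀ t ∈ S ∩ Set.Iio ε, w t < Real.sqrt q * r t) ∧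
    (∃ A ∈ Filter.comap (fun t : ℝ => (t : EReal)) (nhdsWithin ξ (Set.Iio ξ)),
      ∀ t ∈ S ∩ A, w t < Real.sqrt q * r t) ∧
    IntegrableOn w S := by
  replace hSdef : S = Ioi 0 ∩ ((↑) : ℝ → EReal) ⁻¹' Iio ξ := hSdef
  subst hSdef
  have hξ' : ⊥ < ξ := EReal.bot_lt_zero.trans hξ
  have hF := EReal.hasBasis_comap_coe_nhdsLT hξ'
  obtain ⟨ε, hε, hmono0⟩ := hrmono0
  have hS0 : Ioi 0 ∩ ((↑) : ℝ → EReal) ⁻¹' Iio ξ ∩ Iio ε ∈ 𝓝[>] 0 := inter_mem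
    (inter_mem self_mem_nhdsWithin (mem_nhdsWithin_of_mem_nhds
      ((isOpen_Iio.preimage continuous_coe_real_ereal).mem_nhds (by simpa using hξ))))
    (mem_nhdsWithin_of_mem_nhds (Iio_mem_nhds hε))
  obtain ⟨ε₀, hε₀, near0⟩ := mem_nhdsGT_iff_exists_Ioo_subset.1 <|
    eventually_nhdsGT_lt_sqrt_mul hS0 hq (fun t ht => hwode t ht.1) hmono0
      (fun t ht => (hrpos t ht.1).le) hr0
  obtain ⟨A, hA, hmonoξ⟩ := hrmonoξ
  have hSξ : Ioi 0 ∩ ((↑) : ℝ → EReal) ⁻¹' Iio ξ ∈ comap ((↑) : ℝ → EReal) (𝓝[<] ξ) :=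
    mem_of_superset (hF.mem_of_mem (by simpa using hξ)) fun t ht => ⟨EReal.coe_pos.1 ht.1, ht.2⟩
  have nearξ := eventually_comap_coe_nhdsLT_lt_sqrt_mul hξ' (inter_mem hSξ hA) hq
    (fun t ht => hwode t ht.1) hmonoξ (fun t ht => hrpos t ht.1) hwξ
  obtain ⟨d, hdξ, hd⟩ := hF.mem_iff.1 nearξ
  refine ⟨⟨ε₀, hε₀, fun t ht => near0 ⟨ht.1.1, ht.2⟩⟩, ⟨_, nearξ, fun t ht => ht.2⟩, ?_⟩
  refine ContinuousOn.integrableOn_of_norm_le_off_Icc (a := ε₀) (b := d)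
    (fun t ht => (hwode t ht).continuousAt.continuousWithinAt)
    (isOpen_Ioi.inter (isOpen_Iio.preimage continuous_coe_real_ereal)).measurableSet
    (hrint.const_mul √q)
    (fun t ht => ⟨hε₀.trans_le ht.1, (EReal.coe_le_coe_iff.2 ht.2).trans_lt hdξ⟩) ?_
  rintro t ht (htε | hdt) <;> rw [Real.norm_of_nonneg (hwpos t ht).le]
  · exact (near0 ⟨ht.1, htε⟩).le
  · exact (hd ⟨EReal.coe_lt_coe_iff.2 hdt, ht.2⟩).le

/-- On `(0,ξ)` (with `0 < ξ ≤ ∞`), if `r` is continuous positive, monotone near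
`0+` and near `ξ-`, tends to `+∞` at `0+`, and is integrable, and `w > 0` solves
`w' - w² = -q r²` and tends to `0` at `ξ-`, then `w < √q·r` near `0+` and near `ξ-`,
and `∫_0^ξ w < ∞`. -/
theorem stmt_4 (ξ : EReal) (hξ : 0 < ξ) (q : ℝ) (hq : 0 < q) (r w : ℝ → ℝ)
    (S : Set ℝ) (hSdef : S = {t : ℝ | 0 < t ∧ (t : EReal) < ξ})
    (hrc : ContinuousOn r S) (hrpos : ∀ t ∈ S, 0 < r t)
    (hrmono0 : ∃ ε > (0:ℝ), MonotoneOn r (S ∩ Set.Iio ε) ∨ AntitoneOn r (S ∩ Set.Iio ε))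
    (hrmonoξ : ∃ A ∈ Filter.comap (fun t : ℝ => (t : EReal)) (nhdsWithin ξ (Set.Iio ξ)),
      MonotoneOn r (S ∩ A) ∨ AntitoneOn r (S ∩ A))
    (hr0 : Tendsto r (nhdsWithin 0 (Set.Ioi 0)) atTop)
    (hrint : IntegrableOn r S)
    (hwpos : ∀ t ∈ S, 0 < w t)
    (hwode : ∀ t ∈ S, HasDerivAt w (w t ^ 2 - q * r t ^ 2) t)
    (hwξ : Tendsto w (Filter.comap (fun t : ℝ => (t : EReal)) (nhdsWithin ξ (Set.Iio ξ)))
      (nhds 0)) :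
    (∃ ε > (0:ℝ), ∀ t ∈ S ∩ Set.Iio ε, w t < Real.sqrt q * r t) ∧
    (∃ A ∈ Filter.comap (fun t : ℝ => (t : EReal)) (nhdsWithin ξ (Set.Iio ξ)),
      ∀ t ∈ S ∩ A, w t < Real.sqrt q * r t) ∧
    IntegrableOn w S :=
  stmt_4_general ξ hξ q hq r w S hSdef hrpos hrmono0 hrmonoξ hr0 hrint hwpos hwode hwξ
end

section
/- Uniqueness for the Riccati equation: let $r:(0,\xi)\to(0,\infty)$ be continuous and $q>0$. If $h,k:(0,\xi)\to[0,\infty)$ are two differentiable solutions of $y' - y^2 = -qr^2$ on a neighborhood of $\xi$, both tending to $0$ at $\xi-$, then $h = k$ on that neighborhood. -/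
open Filter Set

/-- Uniqueness for the Riccati equation `y' - y² = -q r²`: two nonnegative
solutions on a neighborhood `(a, ξ)` of `ξ`, both tending to `0` at `ξ-`, coincide there. -/
theorem stmt_5 (ξ : EReal) (a : ℝ) (ha : 0 < a) (haξ : (a : EReal) < ξ)
    (q : ℝ) (hq : 0 < q) (r h k : ℝ → ℝ)
    (hrc : ContinuousOn r {t : ℝ | 0 < t ∧ (t : EReal) < ξ})
    (hrpos : ∀ t : ℝ, 0 < t → (t : EReal) < ξ → 0 < r t)
    (hhnn : ∀ t : ℝ, a < t → (t : EReal) < ξ → 0 ≤ h t)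
    (hknn : ∀ t : ℝ, a < t → (t : EReal) < ξ → 0 ≤ k t)
    (hhode : ∀ t : ℝ, a < t → (t : EReal) < ξ → HasDerivAt h (h t ^ 2 - q * r t ^ 2) t)
    (hkode : ∀ t : ℝ, a < t → (t : EReal) < ξ → HasDerivAt k (k t ^ 2 - q * r t ^ 2) t)
    (hhξ : Tendsto h (Filter.comap (fun t : ℝ => (t : EReal)) (nhdsWithin ξ (Set.Iio ξ)))
      (nhds 0))
    (hkξ : Tendsto k (Filter.comap (fun t : ℝ => (t : EReal)) (nhdsWithin ξ (Set.Iio ξ)))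
      (nhds 0)) :
    ∀ t : ℝ, a < t → (t : EReal) < ξ → h t = k t := by
  -- the domain
  set D : Set ℝ := {t : ℝ | a < t ∧ (t : EReal) < ξ} with hD
  have hDeq : D = Ioi a ∩ ((fun t : ℝ => (t : EReal)) ⁻¹' Iio ξ) := by
    ext t; simp [hD, Set.mem_Ioi, Set.mem_Iio, and_comm]
  have hDopen : IsOpen D := by
    rw [hDeq]
    exact isOpen_Ioi.inter ((continuous_coe_real_ereal.isOpen_preimage _ isOpen_Iio))
  have hDord : D.OrdConnected := by
    rw [hDeq]
    exact Set.ordConnected_Ioi.inter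
      ((Set.ordConnected_Iio).preimage_mono (fun x y hxy => EReal.coe_le_coe_iff.2 hxy))
  have hDconv : Convex ℝ D := hDord.convex
  -- u, v
  set u : ℝ → ℝ := fun t => h t - k t with hu
  set v : ℝ → ℝ := fun t => h t + k t with hv
  have hude : ∀ t ∈ D, HasDerivAt u (v t * u t) t := by
    intro t ht
    have := (hhode t ht.1 ht.2).sub (hkode t ht.1 ht.2)
    exact this.congr_deriv (by simp only [hu, hv]; ring)
  have hvnn : ∀ t ∈ D, 0 ≤ v t := fun t ht => add_nonneg (hhnn t ht.1 ht.2) (hknn t ht.1 ht.2)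
  have hvcont : ContinuousOn v D := by
    intro t ht
    exact (((hhode t ht.1 ht.2).continuousAt.add (hkode t ht.1 ht.2).continuousAt)).continuousWithinAt
  -- the limit filter
  set L := Filter.comap (fun t : ℝ => (t : EReal)) (nhdsWithin ξ (Set.Iio ξ)) with hL
  have hLmem : ∀ t0 : ℝ, (t0 : EReal) < ξ → {t : ℝ | t0 < t ∧ (t : EReal) < ξ} ∈ L := by
    intro t0 ht0
    have h1 : Ioi ((t0 : EReal)) ∈ nhdsWithin ξ (Set.Iio ξ) :=
      nhdsWithin_le_nhds (isOpen_Ioi.mem_nhds ht0)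
    have h2 : Iio ξ ∈ nhdsWithin ξ (Set.Iio ξ) := self_mem_nhdsWithin
    have := Filter.inter_mem h1 h2
    refine Filter.mem_comap.2 ⟨_, this, ?_⟩
    intro t ht
    simp only [Set.mem_preimage, Set.mem_inter_iff, Set.mem_Ioi, Set.mem_Iio] at ht
    exact ⟨by exact_mod_cast ht.1, ht.2⟩
  have hLne : L.NeBot := by
    -- find a NeBot real filter mapping into nhdsWithin ξ (Iio ξ)
    induction ξ with
    | bot => exact absurd haξ (by simp)
    | coe c =>
        have htc : Tendsto (fun t : ℝ => (t : EReal)) (nhdsWithin c (Iio c))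
            (nhdsWithin (c : EReal) (Iio (c : EReal))) := by
          refine tendsto_nhdsWithin_of_tendsto_nhds_of_eventually_within _ ?_ ?_
          · exact (continuous_coe_real_ereal.continuousAt).mono_left nhdsWithin_le_nhds
          · filter_upwards [self_mem_nhdsWithin] with t ht
            exact EReal.coe_lt_coe_iff.2 ht
        exact Filter.neBot_of_le (tendsto_iff_comap.1 htc)
    | top =>
        have htc : Tendsto (fun t : ℝ => (t : EReal)) atTop
            (nhdsWithin (⊤ : EReal) (Iio (⊤ : EReal))) := by
          refine tendsto_nhdsWithin_of_tendsto_nhds_of_eventually_within _ ?_ ?_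
          · rw [EReal.tendsto_nhds_top_iff_real]
            intro x
            filter_upwards [eventually_gt_atTop x] with t ht
            exact_mod_cast ht
          · filter_upwards with t
            exact_mod_cast EReal.coe_lt_top t
        exact Filter.neBot_of_le (tendsto_iff_comap.1 htc)
  have huL : Tendsto u L (nhds 0) := by
    have := hhξ.sub hkξ
    simpa using this
  -- main claim: fix t0 ∈ D, show u t0 = 0
  intro t0 ht0a ht0ξ
  have ht0D : t0 ∈ D := ⟨ht0a, ht0ξ⟩
  by_contra hne
  have hune : u t0 ≠ 0 := sub_ne_zero.2 hne
  -- the integrating factor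
  set G : ℝ → ℝ := fun t => ∫ s in t0..t, v s with hG
  have hGderiv : ∀ t ∈ D, HasDerivAt G (v t) t := by
    intro t ht
    have hsub : uIcc t0 t ⊆ D := hDord.uIcc_subset ht0D ht
    refine intervalIntegral.integral_hasDerivAt_right
      ((hvcont.mono hsub).intervalIntegrable) ?_ ?_
    · exact hvcont.stronglyMeasurableAtFilter hDopen t ht
    · exact hvcont.continuousAt (hDopen.mem_nhds ht)
  -- F = u * exp (-G) has zero derivative on D
  set F : ℝ → ℝ := fun t => u t * Real.exp (-G t) with hF
  have hFderiv : ∀ t ∈ D, HasDerivAt F 0 t := by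
    intro t ht
    have h1 := (hude t ht).mul (((hGderiv t ht).neg).exp)
    exact h1.congr_deriv (by ring)
  have hFconst : ∀ t ∈ D, F t = F t0 := by
    intro t ht
    refine (hDconv.is_const_of_fderivWithin_eq_zero (𝕜 := ℝ)
      (fun x hx => ((hFderiv x hx).differentiableAt.differentiableWithinAt)) ?_ ht ht0D)
    intro x hx
    rw [(hFderiv x hx).hasFDerivAt.hasFDerivWithinAt.fderivWithin (hDopen.uniqueDiffWithinAt hx)]
    ext y
    simp
  -- so u t = u t0 * exp (G t) on D
  have hukey : ∀ t ∈ D, u t = u t0 * Real.exp (G t) := by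
    intro t ht
    have := hFconst t ht
    have hGt0 : G t0 = 0 := by simp [hG]
    simp only [hF, hGt0, neg_zero, Real.exp_zero, mul_one] at this
    rw [← this, mul_assoc, ← Real.exp_add]
    simp
  -- and for t ≥ t0, exp (G t) ≥ 1
  have hlower : ∀ t ∈ D, t0 ≤ t → |u t0| ≤ |u t| := by
    intro t ht htt0
    rw [hukey t ht, abs_mul, Real.abs_exp]
    have hGnn : 0 ≤ G t := by
      refine intervalIntegral.integral_nonneg htt0 ?_
      intro s hs
      exact hvnn s (hDord.uIcc_subset ht0D ht
        (by rw [Set.uIcc_of_le htt0]; exact hs))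
    nlinarith [Real.one_le_exp hGnn, abs_nonneg (u t0), abs_pos.2 hune]
  -- derive a contradiction with the limit
  have hev1 : ∀ᶠ t in L, |u t| < |u t0| := by
    have := Metric.tendsto_nhds.mp huL (|u t0|) (abs_pos.2 hune)
    simpa [Real.dist_eq] using this
  have hev2 : ∀ᶠ t in L, t0 < t ∧ (t : EReal) < ξ := hLmem t0 ht0ξ
  obtain ⟨t, ht1, ht2⟩ := (hev1.and hev2).exists
  have htD : t ∈ D := ⟨lt_trans ht0a ht2.1, ht2.2⟩
  exact absurd (hlower t htD ht2.1.le) (not_le.2 ht1)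
end

section
/- Let $q>0$, $r$ continuous and positive on an interval, and let $f$ be a maximal solution of $y' - y^2 = -qr^2$ with $f(T) = a \le 0$ for some $T$ in the interval. Then $f$ is defined and negative on all of $[T,\xi)$ (where $\xi$ is the right endpoint of the interval of continuity of $r$): it cannot blow up to $-\infty$ at an interior time. -/
set_option maxHeartbeats 1000000

open Set Filter

/-- Trivial `HasDerivWithinAt` on a singleton. -/
lemma riccati_hasDerivWithinAt_singleton (f : ℝ → ℝ) (f' x : ℝ) :
    HasDerivWithinAt f f' {x} x := by
  show HasFDerivWithinAt f (ContinuousLinearMap.smulRight (1 : ℝ →L[ℝ] ℝ) f') {x} x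
  simp only [HasFDerivWithinAt, nhdsWithin_singleton, hasFDerivAtFilter_iff_isLittleO,
    Asymptotics.isLittleO_pure]
  simp

/-- Uniqueness for the Riccati equation on a compact interval. -/
lemma riccati_unique (q : ℝ) (r : ℝ → ℝ) {T s : ℝ} (hTs : T ≤ s) (g₁ g₂ : ℝ → ℝ)
    (h1 : ∀ t ∈ Icc T s, HasDerivWithinAt g₁ (g₁ t ^ 2 - q * r t ^ 2) (Icc T s) t)
    (h2 : ∀ t ∈ Icc T s, HasDerivWithinAt g₂ (g₂ t ^ 2 - q * r t ^ 2) (Icc T s) t)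
    (hinit : g₁ T = g₂ T) : EqOn g₁ g₂ (Icc T s) := by
  have hc1 : ContinuousOn g₁ (Icc T s) := fun t ht => (h1 t ht).continuousWithinAt
  have hc2 : ContinuousOn g₂ (Icc T s) := fun t ht => (h2 t ht).continuousWithinAt
  obtain ⟨C₁, hC₁⟩ := (isCompact_Icc).exists_bound_of_continuousOn hc1
  obtain ⟨C₂, hC₂⟩ := (isCompact_Icc).exists_bound_of_continuousOn hc2
  set C : ℝ := max (max C₁ C₂) 0 with hC
  have hC0 : 0 ≤ C := le_max_right _ _
  have hb1 : ∀ t ∈ Icc T s, g₁ t ∈ Metric.closedBall (0:ℝ) C := by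
    intro t ht
    simp only [Metric.mem_closedBall, Real.dist_eq, sub_zero]
    exact (hC₁ t ht).trans ((le_max_left _ _).trans (le_max_left _ _))
  have hb2 : ∀ t ∈ Icc T s, g₂ t ∈ Metric.closedBall (0:ℝ) C := by
    intro t ht
    simp only [Metric.mem_closedBall, Real.dist_eq, sub_zero]
    exact (hC₂ t ht).trans ((le_max_right _ _).trans (le_max_left _ _))
  set K : NNReal := ⟨2 * C, by positivity⟩ with hK
  have hv : ∀ t : ℝ, LipschitzOnWith K (fun x : ℝ => x ^ 2 - q * r t ^ 2)
      (Metric.closedBall (0:ℝ) C) := by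
    intro t
    rw [lipschitzOnWith_iff_dist_le_mul]
    intro x hx y hy
    simp only [Metric.mem_closedBall, Real.dist_eq, sub_zero] at hx hy ⊢
    have : x ^ 2 - q * r t ^ 2 - (y ^ 2 - q * r t ^ 2) = (x + y) * (x - y) := by ring
    rw [this, abs_mul]
    have : |x + y| ≤ 2 * C := (abs_add_le _ _).trans (by linarith)
    calc |x + y| * |x - y| ≤ (2 * C) * |x - y| :=
          mul_le_mul_of_nonneg_right this (abs_nonneg _)
      _ = (K : ℝ) * |x - y| := by rw [hK]; rfl
  have hmem : ∀ t ∈ Ico T s, Icc T s ∈ nhdsWithin t (Ici t) := by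
    intro t ht
    exact mem_of_superset (Icc_mem_nhdsGE_of_mem ⟨le_rfl, ht.2⟩)
      (Icc_subset_Icc_left ht.1)
  exact ODE_solution_unique_of_mem_Icc_right (fun t _ => hv t) hc1
    (fun t ht => (h1 t (Ico_subset_Icc_self ht)).mono_of_mem_nhdsWithin (hmem t ht))
    (fun t ht => hb1 t (Ico_subset_Icc_self ht)) hc2
    (fun t ht => (h2 t (Ico_subset_Icc_self ht)).mono_of_mem_nhdsWithin (hmem t ht))
    (fun t ht => hb2 t (Ico_subset_Icc_self ht)) hinit

/-- A solution of the Riccati equation starting nonpositive stays negative. -/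
lemma riccati_neg {T ξ q : ℝ} (hq : 0 < q) (r : ℝ → ℝ)
    (hrpos : ∀ t ∈ Ico T ξ, 0 < r t) {s : ℝ} (hsξ : s < ξ) (hTs : T ≤ s)
    (g : ℝ → ℝ) (hg : ∀ t ∈ Icc T s, HasDerivWithinAt g (g t ^ 2 - q * r t ^ 2) (Icc T s) t)
    (hgT : g T ≤ 0) : ∀ t ∈ Ioc T s, g t < 0 := by
  by_contra hcon
  push_neg at hcon
  obtain ⟨t₀, ht₀, hgt₀⟩ := hcon
  have cont : ContinuousOn g (Icc T s) := fun t ht => (hg t ht).continuousWithinAt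
  set B : Set ℝ := {t ∈ Ioc T s | 0 ≤ g t} with hBdef
  have hne : B.Nonempty := ⟨t₀, ht₀, hgt₀⟩
  have hbdd : BddBelow B := ⟨T, fun t ht => ht.1.1.le⟩
  set t₁ : ℝ := sInf B with ht₁def
  have hBsub : B ⊆ Icc T s := fun t ht => Ioc_subset_Icc_self ht.1
  have h1 : t₁ ∈ closure B := csInf_mem_closure hne hbdd
  have ht₁mem : t₁ ∈ Icc T s := isClosed_Icc.closure_subset_iff.2 hBsub h1
  have hnbB : (nhdsWithin t₁ B).NeBot := mem_closure_iff_nhdsWithin_neBot.1 h1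
  have hge : 0 ≤ g t₁ := by
    refine ge_of_tendsto (((cont t₁ ht₁mem).mono hBsub).tendsto) ?_
    exact eventually_mem_nhdsWithin.mono fun x hx => hx.2
  have hrt₁ : 0 < r t₁ := hrpos t₁ ⟨ht₁mem.1, lt_of_le_of_lt ht₁mem.2 hsξ⟩
  rcases eq_or_lt_of_le ht₁mem.1 with hT1 | hT1
  · -- t₁ = T
    have hgT0 : g T = 0 := le_antisymm hgT (hT1 ▸ hge)
    have hd : g T ^ 2 - q * r T ^ 2 < 0 := by
      rw [hgT0]
      have : 0 < q * r T ^ 2 := by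
        have : 0 < r T := hT1 ▸ hrt₁
        positivity
      simpa using this
    have hslope : Tendsto (slope g T) (nhdsWithin T (B))
        (nhds (g T ^ 2 - q * r T ^ 2)) := by
      refine (hasDerivWithinAt_iff_tendsto_slope.1 (hg T ⟨le_rfl, hTs⟩)).mono_left
        (nhdsWithin_mono _ ?_)
      intro t ht
      exact ⟨hBsub ht, ne_of_gt ht.1.1⟩
    have hev : ∀ᶠ t in nhdsWithin T B, slope g T t < 0 :=
      hslope.eventually (Filter.Tendsto.eventually_lt_const hd tendsto_id)
    have hev2 : ∀ᶠ t in nhdsWithin T B, 0 ≤ slope g T t := by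
      refine eventually_mem_nhdsWithin.mono fun t ht => ?_
      have h1 : 0 < t - T := sub_pos.2 ht.1.1
      have h2 : 0 ≤ g t - g T := by rw [hgT0, sub_zero]; exact ht.2
      rw [slope_def_field]
      exact div_nonneg h2 h1.le
    haveI : (nhdsWithin T B).NeBot := hT1 ▸ hnbB
    obtain ⟨x, hx1, hx2⟩ := (hev.and hev2).exists
    exact absurd hx1 (not_lt.2 hx2)
  · -- T < t₁
    have hneg : ∀ t ∈ Ioo T t₁, g t < 0 := by
      intro t ht
      by_contra hc
      push_neg at hc
      have htB : t ∈ B := ⟨⟨ht.1, ht.2.le.trans ht₁mem.2⟩, hc⟩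
      exact absurd (csInf_le hbdd htB) (not_le.2 ht.2)
    haveI hIoo : (nhdsWithin t₁ (Ioo T t₁)).NeBot := by
      refine mem_closure_iff_nhdsWithin_neBot.1 ?_
      rw [closure_Ioo (ne_of_lt hT1)]
      exact ⟨hT1.le, le_rfl⟩
    have hIoosub : Ioo T t₁ ⊆ Icc T s := fun t ht =>
      ⟨ht.1.le, ht.2.le.trans ht₁mem.2⟩
    have hle : g t₁ ≤ 0 := by
      refine le_of_tendsto (((cont t₁ ht₁mem).mono hIoosub).tendsto) ?_
      exact eventually_mem_nhdsWithin.mono fun x hx => (hneg x hx).le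
    have hg0 : g t₁ = 0 := le_antisymm hle hge
    have hd : g t₁ ^ 2 - q * r t₁ ^ 2 < 0 := by
      rw [hg0]
      have : 0 < q * r t₁ ^ 2 := by positivity
      simpa using this
    have hslope : Tendsto (slope g t₁) (nhdsWithin t₁ (Ioo T t₁))
        (nhds (g t₁ ^ 2 - q * r t₁ ^ 2)) := by
      refine (hasDerivWithinAt_iff_tendsto_slope.1 (hg t₁ ht₁mem)).mono_left
        (nhdsWithin_mono _ ?_)
      intro t ht
      exact ⟨hIoosub ht, ne_of_lt ht.2⟩
    have hev : ∀ᶠ t in nhdsWithin t₁ (Ioo T t₁), slope g t₁ t < 0 :=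
      hslope.eventually (Filter.Tendsto.eventually_lt_const hd tendsto_id)
    have hev2 : ∀ᶠ t in nhdsWithin t₁ (Ioo T t₁), 0 ≤ slope g t₁ t := by
      refine eventually_mem_nhdsWithin.mono fun t ht => ?_
      have h1 : t - t₁ < 0 := sub_neg.2 ht.2
      have h2 : g t - g t₁ < 0 := by rw [hg0, sub_zero]; exact hneg t ht
      rw [slope_def_field]
      exact (div_pos_of_neg_of_neg h2 h1).le
    obtain ⟨x, hx1, hx2⟩ := (hev.and hev2).exists
    exact absurd hx1 (not_lt.2 hx2)

/-- Lower barrier: the solution stays above `min a (-(√q * M))`. -/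
lemma riccati_lower {T ξ q a : ℝ} (hq : 0 < q) (r : ℝ → ℝ)
    (hrpos : ∀ t ∈ Ico T ξ, 0 < r t) {s M : ℝ} (hsξ : s < ξ) (hTs : T ≤ s)
    (hM : ∀ t ∈ Icc T s, r t ≤ M)
    (g : ℝ → ℝ) (hg : ∀ t ∈ Icc T s, HasDerivWithinAt g (g t ^ 2 - q * r t ^ 2) (Icc T s) t)
    (hgT : g T = a) : ∀ t ∈ Icc T s, min a (-(Real.sqrt q * M)) ≤ g t := by
  set L : ℝ := min a (-(Real.sqrt q * M)) with hLdef
  by_contra hcon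
  push_neg at hcon
  obtain ⟨t₀, ht₀, hgt₀⟩ := hcon
  have cont : ContinuousOn g (Icc T s) := fun t ht => (hg t ht).continuousWithinAt
  have hLa : L ≤ a := min_le_left _ _
  have hTt₀ : T < t₀ := by
    rcases eq_or_lt_of_le ht₀.1 with h | h
    · exact absurd hgt₀ (not_lt.2 (h ▸ (hgT ▸ hLa)))
    · exact h
  set D : Set ℝ := {t ∈ Icc T t₀ | L ≤ g t} with hDdef
  have hTD : T ∈ D := ⟨⟨le_rfl, hTt₀.le⟩, hgT ▸ hLa⟩
  have hne : D.Nonempty := ⟨T, hTD⟩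
  have hbdd : BddAbove D := ⟨t₀, fun t ht => ht.1.2⟩
  set t₁ : ℝ := sSup D with ht₁def
  have hDsub : D ⊆ Icc T t₀ := fun t ht => ht.1
  have hIccsub : Icc T t₀ ⊆ Icc T s := Icc_subset_Icc_right ht₀.2
  have h1 : t₁ ∈ closure D := csSup_mem_closure hne hbdd
  have ht₁mem : t₁ ∈ Icc T t₀ := isClosed_Icc.closure_subset_iff.2 hDsub h1
  haveI hnbD : (nhdsWithin t₁ D).NeBot := mem_closure_iff_nhdsWithin_neBot.1 h1
  have hge : L ≤ g t₁ := by
    refine ge_of_tendsto (((cont t₁ (hIccsub ht₁mem)).mono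
      (hDsub.trans hIccsub)).tendsto) ?_
    exact eventually_mem_nhdsWithin.mono fun x hx => hx.2
  have ht₁t₀ : t₁ < t₀ := by
    rcases eq_or_lt_of_le ht₁mem.2 with h | h
    · exact absurd (h ▸ hge) (not_le.2 hgt₀)
    · exact h
  have hTt₁ : T ≤ t₁ := le_csSup hbdd hTD
  have hlt : ∀ t ∈ Ioc t₁ t₀, g t < L := by
    intro t ht
    by_contra hc
    push_neg at hc
    have htD : t ∈ D := ⟨⟨hTt₁.trans ht.1.le, ht.2⟩, hc⟩
    exact absurd (le_csSup hbdd htD) (not_le.2 ht.1)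
  have hderivpos : ∀ t ∈ Ioo t₁ t₀, 0 < g t ^ 2 - q * r t ^ 2 := by
    intro t ht
    have htmem : t ∈ Icc T s := hIccsub ⟨hTt₁.trans ht.1.le, ht.2.le⟩
    have hrt : 0 < r t := hrpos t ⟨htmem.1, lt_of_le_of_lt htmem.2 hsξ⟩
    have hgtL : g t < L := hlt t ⟨ht.1, ht.2.le⟩
    have hsq : Real.sqrt q * r t < -g t := by
      have h1 : g t < -(Real.sqrt q * M) := lt_of_lt_of_le hgtL (min_le_right _ _)
      have h2 : Real.sqrt q * r t ≤ Real.sqrt q * M :=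
        mul_le_mul_of_nonneg_left (hM t htmem) (Real.sqrt_nonneg q)
      linarith
    have h0 : 0 ≤ Real.sqrt q * r t := by positivity
    have := pow_lt_pow_left₀ hsq h0 (two_ne_zero)
    have heq : (Real.sqrt q * r t) ^ 2 = q * r t ^ 2 := by
      rw [mul_pow, Real.sq_sqrt hq.le]
    rw [heq] at this
    nlinarith [this]
  have hmono : StrictMonoOn g (Icc t₁ t₀) := by
    refine strictMonoOn_of_deriv_pos (convex_Icc t₁ t₀)
      (cont.mono (fun t ht => hIccsub ⟨hTt₁.trans ht.1, ht.2⟩)) ?_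
    intro t ht
    rw [interior_Icc] at ht
    have htmem : t ∈ Icc T s := hIccsub ⟨hTt₁.trans ht.1.le, ht.2.le⟩
    have hda : HasDerivAt g (g t ^ 2 - q * r t ^ 2) t := by
      refine (hg t htmem).hasDerivAt (Icc_mem_nhds ?_ ?_)
      · exact lt_of_le_of_lt hTt₁ ht.1
      · exact lt_of_lt_of_le ht.2 ht₀.2
    rw [hda.deriv]
    exact hderivpos t ht
  have := hmono ⟨le_rfl, ht₁t₀.le⟩ ⟨ht₁t₀.le, le_rfl⟩ ht₁t₀
  linarith [hge, hgt₀]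


/-- Global existence for the Riccati equation on `Icc T s` for any `s ∈ [T, ξ)`. -/
lemma riccati_exists {T ξ q a : ℝ} (hq : 0 < q) (ha : a ≤ 0)
    (r : ℝ → ℝ) (hrc : ContinuousOn r (Ico T ξ)) (hrpos : ∀ t ∈ Ico T ξ, 0 < r t)
    {s : ℝ} (hs : s ∈ Ico T ξ) :
    ∃ g : ℝ → ℝ, g T = a ∧
      ∀ t ∈ Icc T s, HasDerivWithinAt g (g t ^ 2 - q * r t ^ 2) (Icc T s) t := by
  obtain ⟨hTs, hsξ⟩ := hs
  have hsub : Icc T s ⊆ Ico T ξ := fun t ht => ⟨ht.1, lt_of_le_of_lt ht.2 hsξ⟩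
  obtain ⟨M, hM⟩ := isCompact_Icc.exists_bound_of_continuousOn (hrc.mono hsub)
  have hM0 : 0 ≤ M := le_trans (abs_nonneg _) (hM T ⟨le_rfl, hTs⟩)
  have hrM : ∀ t ∈ Icc T s, r t ≤ M := fun t ht => (le_abs_self _).trans (hM t ht)
  set L : ℝ := min a (-(Real.sqrt q * M)) with hLdef
  have hL0 : L ≤ 0 := le_trans (min_le_left _ _) ha
  set Cb : ℝ := |L| + 1 with hCbdef
  have hCb0 : 0 < Cb := by positivity
  set Cv : ℝ := Cb ^ 2 + q * M ^ 2 + 1 with hCvdef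
  have hCv0 : 0 < Cv := by positivity
  set K : NNReal := ⟨2 * Cb, by positivity⟩ with hKdef
  set ε : ℝ := 1 / Cv with hεdef
  have hε0 : 0 < ε := by positivity
  -- the invariant bounds for any solution on a subinterval
  have hbound : ∀ u ∈ Icc T s, ∀ g : ℝ → ℝ, g T = a →
      (∀ t ∈ Icc T u, HasDerivWithinAt g (g t ^ 2 - q * r t ^ 2) (Icc T u) t) →
      ∀ t ∈ Icc T u, L ≤ g t ∧ g t ≤ 0 := by
    intro u hu g hgT hg t ht
    have huξ : u < ξ := lt_of_le_of_lt hu.2 hsξ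
    have hlow := riccati_lower hq r hrpos huξ hu.1
      (fun t ht => hrM t (Icc_subset_Icc_right hu.2 ht)) g hg hgT
    have hup : g t ≤ 0 := by
      rcases eq_or_lt_of_le ht.1 with h | h
      · rw [← h, hgT]; exact ha
      · exact (riccati_neg hq r hrpos huξ hu.1 g hg (hgT ▸ ha) t ⟨h, ht.2⟩).le
    exact ⟨hlow t ht, hup⟩
  -- one Picard-Lindelöf step
  have hstep : ∀ u ∈ Icc T s, u < s →
      (∃ g : ℝ → ℝ, g T = a ∧
        ∀ t ∈ Icc T u, HasDerivWithinAt g (g t ^ 2 - q * r t ^ 2) (Icc T u) t) →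
      ∃ g : ℝ → ℝ, g T = a ∧
        ∀ t ∈ Icc T (min (u + ε) s),
          HasDerivWithinAt g (g t ^ 2 - q * r t ^ 2) (Icc T (min (u + ε) s)) t := by
    rintro u hu hus ⟨g, hgT, hg⟩
    set u' : ℝ := min (u + ε) s with hu'def
    have huu' : u < u' := lt_min (by linarith) hus
    have hu's : u' ≤ s := min_le_right _ _
    have hu'sub : Icc u u' ⊆ Icc T s := fun t ht => ⟨hu.1.trans ht.1, ht.2.trans hu's⟩
    set x₀ : ℝ := g u with hx₀def
    have hx₀mem : L ≤ x₀ ∧ x₀ ≤ 0 := hbound u hu g hgT hg u ⟨hu.1, le_rfl⟩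
    have hx₀abs : |x₀| ≤ |L| := by
      rw [abs_le]
      constructor
      · linarith [neg_abs_le L, hx₀mem.1]
      · linarith [abs_nonneg L, hx₀mem.2]
    have hball : ∀ x ∈ Metric.closedBall x₀ 1, |x| ≤ Cb := by
      intro x hx
      rw [Metric.mem_closedBall, Real.dist_eq] at hx
      have h1 : |x| - |x₀| ≤ |x - x₀| := abs_sub_abs_le_abs_sub x x₀
      have : |x| ≤ |x₀| + 1 := by linarith
      calc |x| ≤ |x₀| + 1 := this
        _ ≤ |L| + 1 := by linarith [hx₀abs]
        _ = Cb := hCbdef.symm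
    have hpl : IsPicardLindelof (fun t x => x ^ 2 - q * r t ^ 2) (tmin := u) (tmax := u')
        ⟨u, le_rfl, huu'.le⟩ x₀ 1 0 ⟨Cv, hCv0.le⟩ K := by
      constructor
      · intro t _
        rw [lipschitzOnWith_iff_dist_le_mul]
        intro x hx y hy
        simp only [Real.dist_eq]
        have h1 : |x| ≤ Cb := hball x hx
        have h2 : |y| ≤ Cb := hball y hy
        have he : x ^ 2 - q * r t ^ 2 - (y ^ 2 - q * r t ^ 2) = (x + y) * (x - y) := by ring
        rw [he, abs_mul]
        have h3 : |x + y| ≤ 2 * Cb := (abs_add_le _ _).trans (by linarith)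
        calc |x + y| * |x - y| ≤ (2 * Cb) * |x - y| :=
              mul_le_mul_of_nonneg_right h3 (abs_nonneg _)
          _ = (K : ℝ) * |x - y| := by rw [hKdef]; rfl
      · intro x _
        exact continuousOn_const.sub (continuousOn_const.mul
          (((hrc.mono (fun t ht => hsub (hu'sub ht))).pow 2)))
      · intro t ht x hx
        have h1 : |x| ≤ Cb := hball x hx
        have h2 : |r t| ≤ M := hM t (hu'sub ht)
        have h3 : x ^ 2 ≤ Cb ^ 2 := by nlinarith [abs_nonneg x, sq_abs x]
        have h4 : r t ^ 2 ≤ M ^ 2 := by nlinarith [abs_nonneg (r t), sq_abs (r t)]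
        rw [Real.norm_eq_abs]
        calc |x ^ 2 - q * r t ^ 2| ≤ x ^ 2 + q * r t ^ 2 := by
              rw [abs_sub_le_iff]
              constructor <;> nlinarith [sq_nonneg x, sq_nonneg (r t)]
          _ ≤ Cb ^ 2 + q * M ^ 2 := by nlinarith
          _ ≤ Cv := by rw [hCvdef]; linarith
      · have h1 : max (u' - u) (u - u) = u' - u := by
          rw [sub_self]; exact max_eq_left (by linarith)
        show Cv * max (u' - u) (u - u) ≤ ((1 : NNReal) : ℝ) - ((0 : NNReal) : ℝ)
        rw [NNReal.coe_zero, sub_zero, NNReal.coe_one]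
        rw [h1]
        have h2 : u' - u ≤ ε := by
          have : u' ≤ u + ε := min_le_left _ _
          linarith
        calc Cv * (u' - u) ≤ Cv * ε := mul_le_mul_of_nonneg_left h2 hCv0.le
          _ = 1 := by rw [hεdef]; field_simp
    obtain ⟨h, hh0, hh⟩ : ∃ h : ℝ → ℝ, h u = x₀ ∧
        ∀ t ∈ Icc u u', HasDerivWithinAt h (h t ^ 2 - q * r t ^ 2) (Icc u u') t :=
      hpl.exists_eq_forall_mem_Icc_hasDerivWithinAt₀
    -- glue
    refine ⟨fun t => if t ≤ u then g t else h t, by simp [hu.1, hgT], ?_⟩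
    set G : ℝ → ℝ := fun t => if t ≤ u then g t else h t with hGdef
    have hGg : EqOn G g (Icc T u) := fun t ht => if_pos ht.2
    have hGh : EqOn G h (Icc u u') := by
      intro t ht
      rcases eq_or_lt_of_le ht.1 with h1 | h1
      · subst h1
        show (if u ≤ u then g u else h u) = h u
        rw [if_pos le_rfl, hh0, hx₀def]
      · exact if_neg (not_le.2 h1)
    have hTu' : T ≤ u' := hu.1.trans huu'.le
    intro t ht
    rcases lt_trichotomy t u with hlt | heq | hgt
    · have htu : t ∈ Icc T u := ⟨ht.1, hlt.le⟩
      have hd := (hg t htu).congr (fun y hy => hGg hy) (hGg htu)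
      rw [← hGg htu] at hd
      refine hd.mono_of_mem_nhdsWithin ?_
      refine mem_of_superset (inter_mem_nhdsWithin (Icc T u') (Iic_mem_nhds hlt)) ?_
      rintro y ⟨hy1, hy2⟩
      exact ⟨hy1.1, hy2⟩
    · have htu : t ∈ Icc T u := ⟨ht.1, heq.le⟩
      have htu2 : t ∈ Icc u u' := ⟨heq.ge, ht.2⟩
      have hd1 := (hg t htu).congr (fun y hy => hGg hy) (hGg htu)
      have hd2 := (hh t htu2).congr (fun y hy => hGh hy) (hGh htu2)
      rw [← hGg htu] at hd1
      rw [← hGh htu2] at hd2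
      have := hd1.union hd2
      rwa [Icc_union_Icc_eq_Icc hu.1 huu'.le] at this
    · have htu : t ∈ Icc u u' := ⟨hgt.le, ht.2⟩
      have hd := (hh t htu).congr (fun y hy => hGh hy) (hGh htu)
      rw [← hGh htu] at hd
      refine hd.mono_of_mem_nhdsWithin ?_
      refine mem_of_superset (inter_mem_nhdsWithin (Icc T u') (Ioi_mem_nhds hgt)) ?_
      rintro y ⟨hy1, hy2⟩
      exact ⟨le_of_lt hy2, hy1.2⟩
  -- induction
  have hkey : ∀ n : ℕ, ∃ g : ℝ → ℝ, g T = a ∧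
      ∀ t ∈ Icc T (min (T + n * ε) s),
        HasDerivWithinAt g (g t ^ 2 - q * r t ^ 2) (Icc T (min (T + n * ε) s)) t := by
    intro n
    induction n with
    | zero =>
        have : min (T + (0:ℕ) * ε) s = T := by
          simp [min_eq_left hTs]
        rw [this]
        refine ⟨fun _ => a, rfl, ?_⟩
        intro t ht
        rw [Icc_self] at ht ⊢
        rw [mem_singleton_iff] at ht
        subst ht
        exact riccati_hasDerivWithinAt_singleton _ _ _
    | succ n ih =>
        have hnn : (0:ℝ) ≤ (n:ℝ) * ε := by positivity
        by_cases hc : T + (n:ℝ) * ε < s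
        · have hul : min (T + (n:ℝ) * ε) s = T + (n:ℝ) * ε := min_eq_left hc.le
          have huIcc : T + (n:ℝ) * ε ∈ Icc T s := ⟨by linarith, hc.le⟩
          rw [hul] at ih
          have h2 := hstep _ huIcc hc ih
          have heq2 : min (T + (n:ℝ) * ε + ε) s = min (T + ((n+1:ℕ):ℝ) * ε) s := by
            congr 1
            push_cast
            ring
          rw [heq2] at h2
          exact h2
        · push_neg at hc
          have h1 : min (T + (n:ℝ) * ε) s = s := min_eq_right hc
          have h3 : min (T + ((n+1:ℕ):ℝ) * ε) s = s := by
            refine min_eq_right ?_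
            push_cast
            nlinarith [hε0.le]
          rw [h3]
          rw [h1] at ih
          exact ih
  obtain ⟨n, hn⟩ := exists_nat_ge ((s - T) / ε)
  have hsn : s - T ≤ (n:ℝ) * ε := by
    rw [div_le_iff₀ hε0] at hn
    linarith
  have hmin : min (T + (n:ℝ) * ε) s = s := min_eq_right (by linarith)
  obtain ⟨g, h1, h2⟩ := hkey n
  rw [hmin] at h2
  exact ⟨g, h1, h2⟩

/-- For the Riccati equation `y' - y² = -q r²` with `r` continuous positive on
`[T, ξ)`, a solution with `f(T) = a ≤ 0` stays negative to the right of `T`, cannot blow up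
to `-∞` at an interior time, and extends to a solution on all of `[T, ξ)`. -/
theorem stmt_6 (T ξ a q : ℝ) (hq : 0 < q) (hTξ : T < ξ) (ha : a ≤ 0)
    (r f : ℝ → ℝ) (hrc : ContinuousOn r (Set.Ico T ξ))
    (hrpos : ∀ t ∈ Set.Ico T ξ, 0 < r t)
    (b : ℝ) (hb : b ∈ Set.Ioc T ξ)
    (hf : ∀ t ∈ Set.Ico T b, HasDerivAt f (f t ^ 2 - q * r t ^ 2) t)
    (hfT : f T = a) :
    (∀ t ∈ Set.Ioo T b, f t < 0) ∧
    (b < ξ → ¬ Tendsto f (nhdsWithin b (Set.Iio b)) atBot) ∧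
    (∃ g : ℝ → ℝ, (∀ t ∈ Set.Ico T ξ, HasDerivAt g (g t ^ 2 - q * r t ^ 2) t) ∧
      Set.EqOn f g (Set.Ico T b) ∧ ∀ t ∈ Set.Ioo T ξ, g t < 0) := by
  obtain ⟨hTb, hbξ⟩ := hb
  -- choose solutions on each compact subinterval
  have hex : ∀ s : ℝ, ∃ g : ℝ → ℝ, s ∈ Ico T ξ → (g T = a ∧
      ∀ t ∈ Icc T s, HasDerivWithinAt g (g t ^ 2 - q * r t ^ 2) (Icc T s) t) := by
    intro s
    by_cases hs : s ∈ Ico T ξ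
    · obtain ⟨g, h1, h2⟩ := riccati_exists hq ha r hrc hrpos hs
      exact ⟨g, fun _ => ⟨h1, h2⟩⟩
    · exact ⟨fun _ => a, fun h => absurd h hs⟩
  choose sol hsol using hex
  -- consistency of solutions
  have hcons : ∀ s ∈ Ico T ξ, ∀ s' ∈ Ico T ξ, ∀ t, t ∈ Icc T s → t ∈ Icc T s' →
      sol s t = sol s' t := by
    intro s hs s' hs' t ht ht'
    have hmin : T ≤ min s s' := le_min hs.1 hs'.1
    have hsub1 : Icc T (min s s') ⊆ Icc T s := Icc_subset_Icc_right (min_le_left _ _)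
    have hsub2 : Icc T (min s s') ⊆ Icc T s' := Icc_subset_Icc_right (min_le_right _ _)
    have h1 : ∀ τ ∈ Icc T (min s s'),
        HasDerivWithinAt (sol s) (sol s τ ^ 2 - q * r τ ^ 2) (Icc T (min s s')) τ :=
      fun τ hτ => ((hsol s hs).2 τ (hsub1 hτ)).mono hsub1
    have h2 : ∀ τ ∈ Icc T (min s s'),
        HasDerivWithinAt (sol s') (sol s' τ ^ 2 - q * r τ ^ 2) (Icc T (min s s')) τ :=
      fun τ hτ => ((hsol s' hs').2 τ (hsub2 hτ)).mono hsub2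
    have heq := riccati_unique q r hmin (sol s) (sol s') h1 h2
      (by rw [(hsol s hs).1, (hsol s' hs').1])
    exact heq ⟨ht.1, le_min ht.2 ht'.2⟩
  -- the global solution
  set G : ℝ → ℝ := fun t =>
    if t < T then a + (t - T) * (a ^ 2 - q * r T ^ 2)
    else if t < ξ then sol ((t + ξ) / 2) t else 0 with hGdef
  have hmid : ∀ t ∈ Ico T ξ, (t + ξ) / 2 ∈ Ico T ξ ∧ t < (t + ξ) / 2 := by
    intro t ht
    constructor
    · constructor
      · nlinarith [ht.1, ht.2]
      · nlinarith [ht.2]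
    · nlinarith [ht.2]
  have hGeq : ∀ s ∈ Ico T ξ, ∀ t ∈ Icc T s, G t = sol s t := by
    intro s hs t ht
    have h2 : t < ξ := lt_of_le_of_lt ht.2 hs.2
    have htIco : t ∈ Ico T ξ := ⟨ht.1, h2⟩
    obtain ⟨hmIco, htm⟩ := hmid t htIco
    have : G t = sol ((t + ξ) / 2) t := by
      rw [hGdef]
      simp only [if_neg (not_lt.2 ht.1), if_pos h2]
    rw [this]
    exact hcons _ hmIco s hs t ⟨ht.1, htm.le⟩ ht
  have hGT : G T = a := by
    rw [hGeq T ⟨le_rfl, hTξ⟩ T ⟨le_rfl, le_rfl⟩, (hsol T ⟨le_rfl, hTξ⟩).1]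
  have hGderiv : ∀ t ∈ Ico T ξ, HasDerivAt G (G t ^ 2 - q * r t ^ 2) t := by
    intro t ht
    obtain ⟨hmIco, htm⟩ := hmid t ht
    set m : ℝ := (t + ξ) / 2 with hmdef
    have htIcc : t ∈ Icc T m := ⟨ht.1, htm.le⟩
    have hEq : EqOn G (sol m) (Icc T m) := fun y hy => hGeq m hmIco y hy
    rcases eq_or_lt_of_le ht.1 with hT | hT
    · -- t = T
      have hright : HasDerivWithinAt G (G t ^ 2 - q * r t ^ 2) (Ici t) t := by
        have hd := ((hsol m hmIco).2 t htIcc).congr (fun y hy => hEq hy) (hEq htIcc)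
        rw [← hEq htIcc] at hd
        refine hd.mono_of_mem_nhdsWithin ?_
        exact Icc_mem_nhdsGE_of_mem ⟨ht.1, htm⟩
      have hleft : HasDerivWithinAt G (G t ^ 2 - q * r t ^ 2) (Iic t) t := by
        have hGt : G t = a := hT ▸ hGT
        have hlin : HasDerivAt (fun x : ℝ => a + (x - T) * (a ^ 2 - q * r T ^ 2))
            (a ^ 2 - q * r T ^ 2) t := by
          have := (((hasDerivAt_id t).sub_const T).mul_const (a ^ 2 - q * r T ^ 2)).const_add a
          simpa using this
        have hEqlin : EqOn G (fun x : ℝ => a + (x - T) * (a ^ 2 - q * r T ^ 2)) (Iic t) := by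
          intro y hy
          rcases lt_or_eq_of_le (mem_Iic.1 hy) with h1 | h1
          · have : y < T := hT ▸ h1
            rw [hGdef]
            simp only [if_pos this]
          · rw [h1, hGt]
            rw [← hT]
            simp
        have := hlin.hasDerivWithinAt.congr (fun y hy => hEqlin hy) (hEqlin (mem_Iic.2 le_rfl))
        have hval : G t ^ 2 - q * r t ^ 2 = a ^ 2 - q * r T ^ 2 := by rw [hGt, ← hT]
        rwa [hval]
      have := hleft.union hright
      rwa [Iic_union_Ici, hasDerivWithinAt_univ] at this
    · -- T < t
      have hda : HasDerivAt (sol m) (sol m t ^ 2 - q * r t ^ 2) t :=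
        ((hsol m hmIco).2 t htIcc).hasDerivAt (Icc_mem_nhds hT htm)
      have hev : G =ᶠ[nhds t] sol m :=
        eventually_of_mem (Icc_mem_nhds hT htm) (fun y hy => hEq hy)
      have := hda.congr_of_eventuallyEq hev
      rw [hGeq m hmIco t htIcc]
      exact this
  have hGneg : ∀ t ∈ Ioo T ξ, G t < 0 := by
    intro t ht
    obtain ⟨hmIco, htm⟩ := hmid t ⟨ht.1.le, ht.2⟩
    rw [hGeq _ hmIco t ⟨ht.1.le, htm.le⟩]
    exact riccati_neg hq r hrpos hmIco.2 hmIco.1 (sol _) (hsol _ hmIco).2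
      (le_of_eq (hsol _ hmIco).1 |>.trans ha) t ⟨ht.1, htm.le⟩
  have hfG : EqOn f G (Ico T b) := by
    intro t ht
    rcases eq_or_lt_of_le ht.1 with h | h
    · rw [← h, hfT, hGT]
    · set sm : ℝ := (t + min b ξ) / 2 with hsmdef
      have h1 : t < min b ξ := lt_min ht.2 (lt_of_lt_of_le ht.2 hbξ)
      have hsm1 : t < sm := by rw [hsmdef]; nlinarith
      have hsm2 : sm < min b ξ := by rw [hsmdef]; nlinarith
      have hsmb : sm < b := lt_of_lt_of_le hsm2 (min_le_left _ _)
      have hsmξ : sm < ξ := lt_of_lt_of_le hsm2 (min_le_right _ _)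
      have hsmIco : sm ∈ Ico T ξ := ⟨ht.1.trans hsm1.le, hsmξ⟩
      have hfs : ∀ τ ∈ Icc T sm,
          HasDerivWithinAt f (f τ ^ 2 - q * r τ ^ 2) (Icc T sm) τ := fun τ hτ =>
        (hf τ ⟨hτ.1, lt_of_le_of_lt hτ.2 hsmb⟩).hasDerivWithinAt
      have huniq := riccati_unique q r (ht.1.trans hsm1.le) f (sol sm) hfs
        (hsol sm hsmIco).2 (by rw [hfT, (hsol sm hsmIco).1])
      rw [huniq ⟨ht.1, hsm1.le⟩, hGeq sm hsmIco t ⟨ht.1, hsm1.le⟩]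
  refine ⟨?_, ?_, G, hGderiv, hfG, hGneg⟩
  · intro t ht
    rw [hfG ⟨ht.1.le, ht.2⟩]
    exact hGneg t ⟨ht.1, lt_of_lt_of_le ht.2 hbξ⟩
  · intro hbξ' hcon
    have hGb : ContinuousAt G b := (hGderiv b ⟨hTb.le, hbξ'⟩).continuousAt
    have h1 : Tendsto G (nhdsWithin b (Iio b)) (nhds (G b)) :=
      hGb.continuousWithinAt.tendsto
    have hev : f =ᶠ[nhdsWithin b (Iio b)] G :=
      eventually_of_mem (Ioo_mem_nhdsLT_of_mem ⟨hTb, le_rfl⟩)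
        (fun y hy => hfG ⟨hy.1.le, hy.2⟩)
    have h2 : Tendsto f (nhdsWithin b (Iio b)) (nhds (G b)) :=
      Tendsto.congr' hev.symm h1
    exact not_tendsto_atBot_of_tendsto_nhds h2 hcon
end

section
/- Let $\bar\Pi:(0,\infty)\to[0,\infty)$ be nonincreasing with finite limit $\rho = \bar\Pi(0+) < \infty$ and $\int_1^\infty \frac{\bar\Pi(r)}{r}dr < \infty$, and set $-m(\lambda) = \int_0^\infty (1-e^{-\lambda r})\frac{\bar\Pi(r)}{cr}dr$ with $c>0$. Then for any fixed $x>0$, $\lim_{\lambda\to\infty}\big(-m(\lambda) - \int_{x/\lambda}^x \frac{\bar\Pi(r)}{cr}dr\big)$ exists and is finite. -/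
open MeasureTheory Set Filter

private lemma integrableOn_of_bdd {f : ℝ → ℝ} {s : Set ℝ} (hμ : MeasureTheory.volume s ≠ ⊤)
    (hm : MeasureTheory.AEStronglyMeasurable f (MeasureTheory.volume.restrict s)) {M : ℝ}
    (hb : ∀ᵐ r ∂(MeasureTheory.volume.restrict s), ‖f r‖ ≤ M) :
    MeasureTheory.IntegrableOn f s MeasureTheory.volume :=
  ⟨hm, MeasureTheory.HasFiniteIntegral.restrict_of_bounded M hμ.lt_top hb⟩

set_option maxHeartbeats 1000000 in
/-- With `μ̄` nonincreasing, `ρ = μ̄(0+) < ∞`, `∫_1^∞ μ̄(r)/r dr < ∞` and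
`-m(λ) = ∫_0^∞ (1 - e^{-λr}) μ̄(r)/(c r) dr`, for fixed `x > 0` the quantity
`-m(λ) - ∫_{x/λ}^x μ̄(r)/(c r) dr` has a finite limit as `λ → ∞`. -/
theorem stmt_9 (c x ρ : ℝ) (hc : 0 < c) (hx : 0 < x)
    (pb : ℝ → ℝ) (hmono : AntitoneOn pb (Set.Ioi 0)) (hpos : ∀ r > (0:ℝ), 0 ≤ pb r)
    (hρ : Tendsto pb (nhdsWithin 0 (Set.Ioi 0)) (nhds ρ))
    (hint : IntegrableOn (fun r => pb r / r) (Set.Ioi 1)) :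
    ∃ L : ℝ, Tendsto
      (fun l : ℝ => (∫ r in Set.Ioi (0:ℝ), (1 - Real.exp (-l * r)) * (pb r / (c * r)))
        - ∫ r in (x / l)..x, pb r / (c * r)) atTop (nhds L) := by
  -- basic facts
  have hρ0 : 0 ≤ ρ := by
    refine ge_of_tendsto hρ ?_
    filter_upwards [self_mem_nhdsWithin] with t ht using hpos t ht
  have hpb_le : ∀ s : ℝ, 0 < s → pb s ≤ ρ := by
    intro s hs
    refine ge_of_tendsto hρ ?_
    filter_upwards [Ioo_mem_nhdsGT_of_mem (show (0:ℝ) ∈ Ico (0:ℝ) s from ⟨le_rfl, hs⟩)]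
      with t ht
    exact hmono (Set.mem_Ioi.2 ht.1) (Set.mem_Ioi.2 hs) ht.2.le
  -- a measurable global version of pb
  set q : ℝ → ℝ := fun r => if r ≤ 0 then ρ else pb r with hqdef
  have hq_anti : Antitone q := by
    intro a b hab
    dsimp only [q]
    split_ifs with hb2 ha2 ha2
    · exact le_rfl
    · exact absurd (hab.trans hb2) ha2
    · exact hpb_le b (not_le.1 hb2)
    · exact hmono (Set.mem_Ioi.2 (not_le.1 ha2)) (Set.mem_Ioi.2 (not_le.1 hb2)) hab
  have hq_meas : Measurable q := hq_anti.measurable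
  have hq_eq : ∀ r : ℝ, 0 < r → q r = pb r := fun r hr => if_neg (not_le.2 hr)
  -- measurability of the density g r = pb r / (c r)
  have hmeas_g : AEStronglyMeasurable (fun r => pb r / (c * r)) (volume.restrict (Set.Ioi 0)) := by
    have h0 : AEStronglyMeasurable (fun r => q r / (c * r)) (volume.restrict (Set.Ioi 0)) :=
      (hq_meas.div (measurable_const.mul measurable_id)).aestronglyMeasurable
    refine h0.congr ?_
    filter_upwards [ae_restrict_mem measurableSet_Ioi] with r hr
    rw [hq_eq r hr]
  have hmeas_g_s : ∀ {s : Set ℝ}, s ⊆ Set.Ioi 0 →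
      AEStronglyMeasurable (fun r => pb r / (c * r)) (volume.restrict s) :=
    fun hs => hmeas_g.mono_measure (Measure.restrict_mono hs le_rfl)
  have hg_nonneg : ∀ r : ℝ, 0 < r → 0 ≤ pb r / (c * r) :=
    fun r hr => div_nonneg (hpos r hr) (by positivity)
  -- integrability of g on Ioi a for a > 0
  have hg_int : ∀ a : ℝ, 0 < a → IntegrableOn (fun r => pb r / (c * r)) (Set.Ioi a) := by
    intro a ha
    have key : IntegrableOn (fun r => pb r / (c * r)) (Set.Ioi 1) := by
      have h1 : IntegrableOn (fun r => c⁻¹ * (pb r / r)) (Set.Ioi 1) := hint.const_mul c⁻¹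
      refine h1.congr_fun (fun r hr => ?_) measurableSet_Ioi
      have hr0 : (0:ℝ) < r := lt_trans one_pos hr
      field_simp
    have h2 : IntegrableOn (fun r => pb r / (c * r)) (Set.Ioi (max a 1)) :=
      key.mono_set (Set.Ioi_subset_Ioi (le_max_right a 1))
    have h1 : IntegrableOn (fun r => pb r / (c * r)) (Set.Ioc a (max a 1)) := by
      refine integrableOn_of_bdd measure_Ioc_lt_top.ne
        (hmeas_g_s (fun r hr => lt_trans ha hr.1)) (M := ρ / (c * a)) ?_
      filter_upwards [ae_restrict_mem measurableSet_Ioc] with r hr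
      have hr0 : 0 < r := lt_trans ha hr.1
      rw [Real.norm_eq_abs, abs_of_nonneg (hg_nonneg r hr0)]
      exact div_le_div₀ (by positivity) (hpb_le r hr0) (by positivity)
        (by nlinarith [hr.1])
    have hu : Set.Ioi a = Set.Ioc a (max a 1) ∪ Set.Ioi (max a 1) :=
      (Set.Ioc_union_Ioi_eq_Ioi (le_max_left a 1)).symm
    rw [hu]
    exact h1.union h2
  -- elementary exponential bounds
  have hexp_le : ∀ t : ℝ, 0 ≤ t → 1 - Real.exp (-t) ≤ t := by
    intro t ht
    have := Real.add_one_le_exp (-t)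
    linarith
  have hexp_nonneg : ∀ t : ℝ, 0 ≤ t → 0 ≤ 1 - Real.exp (-t) := by
    intro t ht
    have : Real.exp (-t) ≤ 1 := Real.exp_le_one_iff.2 (by linarith)
    linarith
  -- integrability of the full integrand
  have hf_meas : ∀ l : ℝ, ∀ {s : Set ℝ}, s ⊆ Set.Ioi 0 →
      AEStronglyMeasurable (fun r => (1 - Real.exp (-l * r)) * (pb r / (c * r)))
        (volume.restrict s) := by
    intro l s hs
    exact (Continuous.aestronglyMeasurable (by continuity)).mul (hmeas_g_s hs)
  have hf_int_Ioc : ∀ l : ℝ, 0 < l →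
      IntegrableOn (fun r => (1 - Real.exp (-l * r)) * (pb r / (c * r))) (Set.Ioc 0 x) := by
    intro l hl
    refine integrableOn_of_bdd measure_Ioc_lt_top.ne
      (hf_meas l Set.Ioc_subset_Ioi_self) (M := l * ρ / c) ?_
    filter_upwards [ae_restrict_mem measurableSet_Ioc] with r hr
    have hr0 : 0 < r := hr.1
    have h1 : 0 ≤ 1 - Real.exp (-l * r) := by
      rw [neg_mul]; exact hexp_nonneg _ (by positivity)
    have h2 : 1 - Real.exp (-l * r) ≤ l * r := by
      rw [neg_mul]; exact hexp_le _ (by positivity)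
    rw [Real.norm_eq_abs, abs_of_nonneg (mul_nonneg h1 (hg_nonneg r hr0))]
    have h3 : pb r / (c * r) ≤ ρ / (c * r) :=
      div_le_div₀ hρ0 (hpb_le r hr0) (by positivity) le_rfl
    calc (1 - Real.exp (-l * r)) * (pb r / (c * r)) ≤ (l * r) * (ρ / (c * r)) :=
        mul_le_mul h2 h3 (hg_nonneg r hr0) (by positivity)
      _ = l * ρ / c := by field_simp
  have hf_int_Ioi : ∀ l : ℝ, 0 ≤ l →
      IntegrableOn (fun r => (1 - Real.exp (-l * r)) * (pb r / (c * r))) (Set.Ioi x) := by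
    intro l hl
    refine Integrable.mono (hg_int x hx) (hf_meas l (Set.Ioi_subset_Ioi hx.le)) ?_
    filter_upwards [ae_restrict_mem measurableSet_Ioi] with r hr
    have hr0 : 0 < r := hx.trans hr
    have h1 : 0 ≤ 1 - Real.exp (-l * r) := by
      rw [neg_mul]; exact hexp_nonneg _ (by positivity)
    have h2 : 1 - Real.exp (-l * r) ≤ 1 := by linarith [Real.exp_pos (-l * r)]
    rw [Real.norm_eq_abs, Real.norm_eq_abs, abs_of_nonneg (mul_nonneg h1 (hg_nonneg r hr0)),
      abs_of_nonneg (hg_nonneg r hr0)]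
    nlinarith [hg_nonneg r hr0]
  -- the rescaled middle part
  set Ψ : ℝ → ℝ → ℝ := fun l u =>
    (Set.indicator (Set.Ioc 0 (l * x)) (fun v => 1 - Real.exp (-v)) u
      - Set.indicator (Set.Ioc x (l * x)) (fun _ => (1:ℝ)) u) * (pb (u / l) / (c * u))
    with hΨdef
  -- main identity
  have main_eq : ∀ l : ℝ, 1 ≤ l →
      (∫ r in Set.Ioi (0:ℝ), (1 - Real.exp (-l * r)) * (pb r / (c * r)))
        - (∫ r in (x / l)..x, pb r / (c * r))
      = (∫ u in Set.Ioi (0:ℝ), Ψ l u)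
        + ∫ r in Set.Ioi x, (1 - Real.exp (-l * r)) * (pb r / (c * r)) := by
    intro l hl
    have hl0 : 0 < l := lt_of_lt_of_le one_pos hl
    have hIoc : IntegrableOn (fun r => (1 - Real.exp (-l * r)) * (pb r / (c * r)))
        (Set.Ioc 0 x) := hf_int_Ioc l hl0
    have hIoi : IntegrableOn (fun r => (1 - Real.exp (-l * r)) * (pb r / (c * r)))
        (Set.Ioi x) := hf_int_Ioi l hl0.le
    have hsplit : (∫ r in Set.Ioi (0:ℝ), (1 - Real.exp (-l * r)) * (pb r / (c * r)))
        = (∫ r in Set.Ioc 0 x, (1 - Real.exp (-l * r)) * (pb r / (c * r)))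
          + ∫ r in Set.Ioi x, (1 - Real.exp (-l * r)) * (pb r / (c * r)) := by
      rw [← Set.Ioc_union_Ioi_eq_Ioi hx.le,
        setIntegral_union (Set.Ioc_disjoint_Ioi le_rfl) measurableSet_Ioi hIoc hIoi]
    have hsub2 : Set.Ioc (x / l) x ⊆ Set.Ioi (0:ℝ) :=
      fun r hr => lt_of_le_of_lt (div_nonneg hx.le hl0.le) hr.1
    have hgIoc : IntegrableOn (fun r => pb r / (c * r)) (Set.Ioc (x / l) x) := by
      refine integrableOn_of_bdd measure_Ioc_lt_top.ne (hmeas_g_s hsub2)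
        (M := ρ / (c * (x / l))) ?_
      filter_upwards [ae_restrict_mem measurableSet_Ioc] with r hr
      have hr0 : 0 < r := hsub2 hr
      rw [Real.norm_eq_abs, abs_of_nonneg (hg_nonneg r hr0)]
      exact div_le_div₀ hρ0 (hpb_le r hr0) (by positivity)
        (mul_le_mul_of_nonneg_left hr.1.le hc.le)
    have hivl : (∫ r in (x / l)..x, pb r / (c * r))
        = ∫ r in Set.Ioc (x / l) x, pb r / (c * r) :=
      intervalIntegral.integral_of_le (div_le_self hx.le hl)
    have hi1 : Integrable
        (Set.indicator (Set.Ioc 0 x) (fun r => (1 - Real.exp (-l * r)) * (pb r / (c * r))))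
        (volume.restrict (Set.Ioi 0)) := by
      rw [integrable_indicator_iff measurableSet_Ioc, IntegrableOn,
        Measure.restrict_restrict measurableSet_Ioc,
        Set.inter_eq_self_of_subset_left Set.Ioc_subset_Ioi_self]
      exact hIoc
    have hi2 : Integrable
        (Set.indicator (Set.Ioc (x / l) x) (fun r => pb r / (c * r)))
        (volume.restrict (Set.Ioi 0)) := by
      rw [integrable_indicator_iff measurableSet_Ioc, IntegrableOn,
        Measure.restrict_restrict measurableSet_Ioc,
        Set.inter_eq_self_of_subset_left hsub2]
      exact hgIoc
    set Φ : ℝ → ℝ := fun r =>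
      Set.indicator (Set.Ioc 0 x) (fun r => (1 - Real.exp (-l * r)) * (pb r / (c * r))) r
        - Set.indicator (Set.Ioc (x / l) x) (fun r => pb r / (c * r)) r with hΦdef
    have hphi : (∫ r in Set.Ioi (0:ℝ), Φ r)
        = (∫ r in Set.Ioc 0 x, (1 - Real.exp (-l * r)) * (pb r / (c * r)))
          - ∫ r in Set.Ioc (x / l) x, pb r / (c * r) := by
      rw [hΦdef]
      rw [integral_sub hi1 hi2, integral_indicator measurableSet_Ioc,
        integral_indicator measurableSet_Ioc,
        Measure.restrict_restrict measurableSet_Ioc,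
        Measure.restrict_restrict measurableSet_Ioc,
        Set.inter_eq_self_of_subset_left Set.Ioc_subset_Ioi_self,
        Set.inter_eq_self_of_subset_left hsub2]
    have hkey : ∀ u ∈ Set.Ioi (0:ℝ), l⁻¹ * Φ (l⁻¹ * u) = Ψ l u := by
      intro u hu
      have hu0 : 0 < u := hu
      have hu' : u ≠ 0 := hu0.ne'
      have hl' : l ≠ 0 := hl0.ne'
      have hc' : c ≠ 0 := hc.ne'
      have hiff : x / l < l⁻¹ * u ↔ x < u := by
        rw [inv_mul_eq_div]; exact div_lt_div_iff_of_pos_right hl0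
      by_cases h2 : u ≤ l * x
      · have m1 : l⁻¹ * u ∈ Set.Ioc 0 x := by
          constructor
          · positivity
          · rw [inv_mul_eq_div, div_le_iff₀ hl0]; nlinarith
        have m1' : u ∈ Set.Ioc 0 (l * x) := ⟨hu0, h2⟩
        by_cases h3 : x < u
        · have m2 : l⁻¹ * u ∈ Set.Ioc (x / l) x := ⟨hiff.2 h3, m1.2⟩
          have m2' : u ∈ Set.Ioc x (l * x) := ⟨h3, h2⟩
          simp only [hΦdef, hΨdef, Set.indicator_of_mem m1, Set.indicator_of_mem m2,
            Set.indicator_of_mem m1', Set.indicator_of_mem m2']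
          simp only [inv_mul_eq_div]
          rw [show -l * (u / l) = -u by field_simp]
          field_simp
        · have m2 : l⁻¹ * u ∉ Set.Ioc (x / l) x := fun h => h3 (hiff.1 h.1)
          have m2' : u ∉ Set.Ioc x (l * x) := fun h => h3 h.1
          simp only [hΦdef, hΨdef, Set.indicator_of_mem m1, Set.indicator_of_notMem m2,
            Set.indicator_of_mem m1', Set.indicator_of_notMem m2']
          simp only [inv_mul_eq_div]
          rw [show -l * (u / l) = -u by field_simp]
          field_simp
          ring
      · push_neg at h2
        have hxu : x < l⁻¹ * u := by
          rw [inv_mul_eq_div, lt_div_iff₀ hl0]; nlinarith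
        have m1 : l⁻¹ * u ∉ Set.Ioc 0 x := fun h => absurd hxu (not_lt.2 h.2)
        have m2 : l⁻¹ * u ∉ Set.Ioc (x / l) x := fun h => absurd hxu (not_lt.2 h.2)
        have m1' : u ∉ Set.Ioc 0 (l * x) := fun h => absurd h2 (not_lt.2 h.2)
        have m2' : u ∉ Set.Ioc x (l * x) := fun h => absurd h2 (not_lt.2 h.2)
        simp only [hΦdef, hΨdef, Set.indicator_of_notMem m1, Set.indicator_of_notMem m2,
          Set.indicator_of_notMem m1', Set.indicator_of_notMem m2']
        ring
    have hscale : (∫ r in Set.Ioi (0:ℝ), Φ r) = ∫ u in Set.Ioi (0:ℝ), Ψ l u := by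
      have hcomp := integral_comp_mul_left_Ioi Φ 0 (inv_pos.2 hl0)
      rw [mul_zero, inv_inv] at hcomp
      calc (∫ r in Set.Ioi (0:ℝ), Φ r)
          = l⁻¹ • (l • ∫ r in Set.Ioi (0:ℝ), Φ r) := by
            rw [smul_smul, inv_mul_cancel₀ hl0.ne', one_smul]
        _ = l⁻¹ • ∫ u in Set.Ioi (0:ℝ), Φ (l⁻¹ * u) := by rw [hcomp]
        _ = ∫ u in Set.Ioi (0:ℝ), l⁻¹ * Φ (l⁻¹ * u) := by
            rw [← integral_smul]; simp only [smul_eq_mul]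
        _ = ∫ u in Set.Ioi (0:ℝ), Ψ l u := setIntegral_congr_fun measurableSet_Ioi hkey
    rw [hsplit, hivl, ← hscale, hphi]
    ring
  -- limit of the rescaled middle part (dominated convergence)
  have hD1 : Tendsto (fun l => ∫ u in Set.Ioi (0:ℝ), Ψ l u) atTop
      (nhds (∫ u in Set.Ioi (0:ℝ),
        ((1 - Real.exp (-u)) - Set.indicator (Set.Ioi x) (fun _ => (1:ℝ)) u) * (ρ / (c * u)))) := by
    refine tendsto_integral_filter_of_dominated_convergence
      (fun u => Set.indicator (Set.Ioc 0 x) (fun _ => ρ / c) u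
        + Set.indicator (Set.Ioi x) (fun u => ρ / (c * x) * Real.exp (-u)) u) ?_ ?_ ?_ ?_
    · filter_upwards [eventually_ge_atTop (1:ℝ)] with l hl
      have hl0 : 0 < l := lt_of_lt_of_le one_pos hl
      have hm1 : Measurable (fun u : ℝ =>
          Set.indicator (Set.Ioc 0 (l * x)) (fun v => 1 - Real.exp (-v)) u
            - Set.indicator (Set.Ioc x (l * x)) (fun _ => (1:ℝ)) u) :=
        ((measurable_const.sub (Real.measurable_exp.comp measurable_neg)).indicator
          measurableSet_Ioc).sub (measurable_const.indicator measurableSet_Ioc)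
      have hm2 : AEStronglyMeasurable (fun u => pb (u / l) / (c * u))
          (volume.restrict (Set.Ioi 0)) := by
        have h0 : AEStronglyMeasurable (fun u => q (u / l) / (c * u))
            (volume.restrict (Set.Ioi 0)) :=
          ((hq_meas.comp (measurable_id.div_const l)).div
            (measurable_const.mul measurable_id)).aestronglyMeasurable
        refine h0.congr ?_
        filter_upwards [ae_restrict_mem measurableSet_Ioi] with u hu
        rw [hq_eq _ (div_pos hu hl0)]
      exact hm1.aestronglyMeasurable.mul hm2
    · filter_upwards [eventually_ge_atTop (1:ℝ)] with l hl
      have hl0 : 0 < l := lt_of_lt_of_le one_pos hl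
      filter_upwards [ae_restrict_mem measurableSet_Ioi] with u hu
      have hu0 : 0 < u := hu
      have hul : 0 < u / l := div_pos hu0 hl0
      have hpb1 : 0 ≤ pb (u / l) := hpos _ hul
      have hpb2 : pb (u / l) ≤ ρ := hpb_le _ hul
      by_cases h1 : u ≤ x
      · have hmem1 : u ∈ Set.Ioc 0 (l * x) := ⟨hu0, h1.trans (le_mul_of_one_le_left hx.le hl)⟩
        have hmem2 : u ∉ Set.Ioc x (l * x) := fun h => absurd h.1 (not_lt.2 h1)
        have hmem3 : u ∉ Set.Ioi x := not_lt.2 h1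
        simp only [hΨdef, Set.indicator_of_mem hmem1, Set.indicator_of_notMem hmem2,
          Set.indicator_of_mem (show u ∈ Set.Ioc 0 x from ⟨hu0, h1⟩),
          Set.indicator_of_notMem hmem3, sub_zero, add_zero]
        have e1 : 0 ≤ 1 - Real.exp (-u) := hexp_nonneg u hu0.le
        have e2 : 1 - Real.exp (-u) ≤ u := hexp_le u hu0.le
        rw [Real.norm_eq_abs, abs_of_nonneg (mul_nonneg e1 (div_nonneg hpb1 (by positivity)))]
        calc (1 - Real.exp (-u)) * (pb (u / l) / (c * u)) ≤ u * (ρ / (c * u)) :=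
            mul_le_mul e2 (div_le_div₀ hρ0 hpb2 (by positivity) le_rfl)
              (div_nonneg hpb1 (by positivity)) hu0.le
          _ = ρ / c := by field_simp
      · push_neg at h1
        have hnmem : u ∉ Set.Ioc 0 x := fun h => absurd h.2 (not_le.2 h1)
        have hmem3 : u ∈ Set.Ioi x := Set.mem_Ioi.2 h1
        by_cases h2 : u ≤ l * x
        · have hmem1 : u ∈ Set.Ioc 0 (l * x) := ⟨hu0, h2⟩
          have hmem2 : u ∈ Set.Ioc x (l * x) := ⟨h1, h2⟩
          simp only [hΨdef, Set.indicator_of_mem hmem1, Set.indicator_of_mem hmem2,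
            Set.indicator_of_notMem hnmem, Set.indicator_of_mem hmem3, zero_add]
          have e0 : (1 - Real.exp (-u) - 1) * (pb (u / l) / (c * u))
              = -(Real.exp (-u) * (pb (u / l) / (c * u))) := by ring
          rw [e0, Real.norm_eq_abs, abs_neg,
            abs_of_nonneg (mul_nonneg (Real.exp_pos _).le (div_nonneg hpb1 (by positivity)))]
          calc Real.exp (-u) * (pb (u / l) / (c * u)) ≤ Real.exp (-u) * (ρ / (c * x)) :=
              mul_le_mul_of_nonneg_left
                (div_le_div₀ hρ0 hpb2 (by positivity)
                  (mul_le_mul_of_nonneg_left h1.le hc.le)) (Real.exp_pos _).le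
            _ = ρ / (c * x) * Real.exp (-u) := mul_comm _ _
        · push_neg at h2
          have hmem1 : u ∉ Set.Ioc 0 (l * x) := fun h => absurd h.2 (not_le.2 h2)
          have hmem2 : u ∉ Set.Ioc x (l * x) := fun h => absurd h.2 (not_le.2 h2)
          simp only [hΨdef, Set.indicator_of_notMem hmem1, Set.indicator_of_notMem hmem2,
            Set.indicator_of_notMem hnmem, Set.indicator_of_mem hmem3, sub_zero, zero_add,
            zero_mul, norm_zero]
          positivity
    · apply Integrable.add
      · rw [integrable_indicator_iff measurableSet_Ioc]
        refine integrableOn_const (ne_of_lt ?_)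
        calc (volume.restrict (Set.Ioi 0)) (Set.Ioc 0 x)
            ≤ volume (Set.Ioc 0 x) := Measure.restrict_apply_le _ _
          _ < ⊤ := measure_Ioc_lt_top
      · rw [integrable_indicator_iff measurableSet_Ioi, IntegrableOn,
          Measure.restrict_restrict measurableSet_Ioi,
          Set.inter_eq_self_of_subset_left (Set.Ioi_subset_Ioi hx.le)]
        have h0 := (exp_neg_integrableOn_Ioi x one_pos).const_mul (ρ / (c * x))
        simpa [neg_one_mul] using h0
    · filter_upwards [ae_restrict_mem measurableSet_Ioi] with u hu
      have hu0 : 0 < u := hu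
      have hb : Tendsto (fun l : ℝ => pb (u / l) / (c * u)) atTop (nhds (ρ / (c * u))) := by
        have hdiv : Tendsto (fun l : ℝ => u / l) atTop (nhdsWithin 0 (Set.Ioi 0)) := by
          rw [tendsto_nhdsWithin_iff]
          constructor
          · exact Tendsto.div_atTop tendsto_const_nhds tendsto_id
          · filter_upwards [eventually_gt_atTop (0:ℝ)] with l hl using div_pos hu0 hl
        exact (hρ.comp hdiv).div_const (c * u)
      refine Tendsto.congr' ?_
        (hb.const_mul ((1 - Real.exp (-u)) - Set.indicator (Set.Ioi x) (fun _ => (1:ℝ)) u))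
      filter_upwards [eventually_ge_atTop (max 1 (u / x))] with l hl
      have hl1 : (1:ℝ) ≤ l := le_trans (le_max_left _ _) hl
      have hlx : u ≤ l * x := by
        have h2 := le_trans (le_max_right 1 (u / x)) hl
        calc u = u / x * x := (div_mul_cancel₀ u hx.ne').symm
          _ ≤ l * x := mul_le_mul_of_nonneg_right h2 hx.le
      have hmem1 : u ∈ Set.Ioc 0 (l * x) := ⟨hu0, hlx⟩
      simp only [hΨdef, Set.indicator_of_mem hmem1]
      by_cases hxu : x < u
      · rw [Set.indicator_of_mem (show u ∈ Set.Ioc x (l * x) from ⟨hxu, hlx⟩),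
          Set.indicator_of_mem (Set.mem_Ioi.2 hxu)]
      · rw [Set.indicator_of_notMem
            (fun (h : u ∈ Set.Ioc x (l * x)) => hxu h.1),
          Set.indicator_of_notMem (fun (h : u ∈ Set.Ioi x) => hxu h)]
  -- limit of the tail (dominated convergence)
  have hD2 : Tendsto (fun l => ∫ r in Set.Ioi x, (1 - Real.exp (-l * r)) * (pb r / (c * r)))
      atTop (nhds (∫ r in Set.Ioi x, pb r / (c * r))) := by
    refine tendsto_integral_filter_of_dominated_convergence
      (fun r => pb r / (c * r)) ?_ ?_ (hg_int x hx) ?_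
    · filter_upwards [eventually_ge_atTop (0:ℝ)] with l hl
        using hf_meas l (Set.Ioi_subset_Ioi hx.le)
    · filter_upwards [eventually_ge_atTop (0:ℝ)] with l hl
      filter_upwards [ae_restrict_mem measurableSet_Ioi] with r hr
      have hr0 : 0 < r := hx.trans hr
      have h1 : 0 ≤ 1 - Real.exp (-l * r) := by
        rw [neg_mul]; exact hexp_nonneg _ (by positivity)
      have h2 : 1 - Real.exp (-l * r) ≤ 1 := by linarith [Real.exp_pos (-l * r)]
      rw [Real.norm_eq_abs, abs_of_nonneg (mul_nonneg h1 (hg_nonneg r hr0))]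
      nlinarith [hg_nonneg r hr0]
    · filter_upwards [ae_restrict_mem measurableSet_Ioi] with r hr
      have hr0 : 0 < r := hx.trans hr
      have hexp : Tendsto (fun l : ℝ => Real.exp (-l * r)) atTop (nhds 0) := by
        have h0 : Tendsto (fun l : ℝ => l * r) atTop atTop :=
          Filter.Tendsto.atTop_mul_const hr0 Filter.tendsto_id
        have h1 : Tendsto (fun l : ℝ => -(l * r)) atTop atBot :=
          tendsto_neg_atTop_atBot.comp h0
        have h2 := Real.tendsto_exp_atBot.comp h1
        simpa [Function.comp_def, neg_mul] using h2
      have h3 : Tendsto (fun l : ℝ => 1 - Real.exp (-l * r)) atTop (nhds 1) := by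
        simpa using (tendsto_const_nhds (x := (1:ℝ)) (f := atTop)).sub hexp
      simpa using h3.mul_const (pb r / (c * r))
  refine ⟨_, Tendsto.congr' ?_ (hD1.add hD2)⟩
  filter_upwards [eventually_ge_atTop (1:ℝ)] with l hl using (main_eq l hl).symm
end

section
/- Combining the previous two statements: under the hypotheses of the statement on $\lim(-m(\lambda) - \int_{x/\lambda}^x\bar\Pi(r)/(cr)dr)$, with $\rho = \bar\Pi(0+)<\infty$ and $\delta = 0$, the integral $\int_1^\infty e^{m(\lambda)}\,d\lambda$ is finite if $\rho > c$ and infinite if $\rho \le c$. -/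
open MeasureTheory Set Filter

lemma pb_le_rho {pb : ℝ → ℝ} {ρ : ℝ} (hmono : AntitoneOn pb (Set.Ioi 0))
    (hρ : Tendsto pb (nhdsWithin 0 (Set.Ioi 0)) (nhds ρ)) {r : ℝ} (hr : 0 < r) :
    pb r ≤ ρ := by
  refine ge_of_tendsto hρ ?_
  filter_upwards [Ioo_mem_nhdsGT_of_mem (show (0:ℝ) ∈ Ico (0:ℝ) r from ⟨le_rfl, hr⟩)] with s hs
  exact hmono hs.1 hr hs.2.le

lemma one_sub_exp_mem {t : ℝ} (ht : 0 ≤ t) : 0 ≤ 1 - Real.exp (-t) ∧ 1 - Real.exp (-t) ≤ 1 ∧ 1 - Real.exp (-t) ≤ t := by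
  have h1 := Real.add_one_le_exp (-t)
  have h2 : Real.exp (-t) ≤ 1 := Real.exp_le_one_iff.mpr (by linarith)
  have h3 := Real.exp_pos (-t)
  exact ⟨by linarith, by linarith, by linarith⟩

lemma f_meas {c : ℝ} (hc : 0 < c) {pb : ℝ → ℝ} (hmono : AntitoneOn pb (Set.Ioi 0)) (l : ℝ)
    {s : Set ℝ} (hs : s ⊆ Set.Ioi 0) :
    AEStronglyMeasurable (fun r => (1 - Real.exp (-l * r)) * (pb r / (c * r))) (volume.restrict s) := by
  have hpb : AEMeasurable pb (volume.restrict s) :=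
    (aemeasurable_restrict_of_antitoneOn measurableSet_Ioi hmono).mono_measure
      (Measure.restrict_mono hs le_rfl)
  have h1 : Continuous fun r : ℝ => 1 - Real.exp (-l * r) := by continuity
  have h2 : Measurable fun r : ℝ => (c * r)⁻¹ := (measurable_const.mul measurable_id).inv
  have : AEMeasurable (fun r => (1 - Real.exp (-l * r)) * (pb r * (c * r)⁻¹)) (volume.restrict s) :=
    (h1.measurable.aemeasurable).mul (hpb.mul h2.aemeasurable)
  simpa [div_eq_mul_inv] using this.aestronglyMeasurable

lemma f_nonneg {c : ℝ} (hc : 0 < c) {pb : ℝ → ℝ} (hpos : ∀ r > (0:ℝ), 0 ≤ pb r)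
    {l : ℝ} (hl : 0 ≤ l) {r : ℝ} (hr : 0 < r) :
    0 ≤ (1 - Real.exp (-l * r)) * (pb r / (c * r)) := by
  have h1 := (one_sub_exp_mem (t := l * r) (mul_nonneg hl hr.le)).1
  rw [show -l * r = -(l * r) by ring]
  exact mul_nonneg h1 (div_nonneg (hpos r hr) (mul_nonneg hc.le hr.le))

lemma f_le_const {c ρ : ℝ} (hc : 0 < c) {pb : ℝ → ℝ} (hmono : AntitoneOn pb (Set.Ioi 0))
    (hpos : ∀ r > (0:ℝ), 0 ≤ pb r)
    (hρ : Tendsto pb (nhdsWithin 0 (Set.Ioi 0)) (nhds ρ))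
    {l : ℝ} (hl : 0 < l) {r : ℝ} (hr : 0 < r) :
    (1 - Real.exp (-l * r)) * (pb r / (c * r)) ≤ l * ρ / c := by
  have hb := one_sub_exp_mem (t := l * r) (mul_nonneg hl.le hr.le)
  have hpb := pb_le_rho hmono hρ hr
  have hpb0 := hpos r hr
  have h1 : (1 : ℝ) - Real.exp (-l * r) ≤ l * r := by
    rw [show -l * r = -(l * r) by ring]; exact hb.2.2
  have h0 : (0:ℝ) ≤ 1 - Real.exp (-l * r) := by
    rw [show -l * r = -(l * r) by ring]; exact hb.1
  have h2 : pb r / (c * r) ≤ ρ / (c * r) := by gcongr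
  calc (1 - Real.exp (-l * r)) * (pb r / (c * r))
      ≤ (l * r) * (ρ / (c * r)) := by
        apply mul_le_mul h1 h2 (div_nonneg hpb0 (by positivity)) (by positivity)
    _ = l * ρ / c := by field_simp

lemma f_le_tail {c : ℝ} (hc : 0 < c) {pb : ℝ → ℝ} (hpos : ∀ r > (0:ℝ), 0 ≤ pb r)
    {l : ℝ} (hl : 0 ≤ l) {r : ℝ} (hr : 0 < r) :
    (1 - Real.exp (-l * r)) * (pb r / (c * r)) ≤ c⁻¹ * (pb r / r) := by
  have hb := one_sub_exp_mem (t := l * r) (mul_nonneg hl hr.le)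
  have h1 : (1 : ℝ) - Real.exp (-l * r) ≤ 1 := by
    rw [show -l * r = -(l * r) by ring]; exact hb.2.1
  calc (1 - Real.exp (-l * r)) * (pb r / (c * r))
      ≤ 1 * (pb r / (c * r)) := by
        apply mul_le_mul_of_nonneg_right h1 (div_nonneg (hpos r hr) (by positivity))
    _ = c⁻¹ * (pb r / r) := by field_simp

lemma f_integrable {c ρ : ℝ} (hc : 0 < c) {pb : ℝ → ℝ} (hmono : AntitoneOn pb (Set.Ioi 0))
    (hpos : ∀ r > (0:ℝ), 0 ≤ pb r)
    (hρ : Tendsto pb (nhdsWithin 0 (Set.Ioi 0)) (nhds ρ))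
    (hint : IntegrableOn (fun r => pb r / r) (Set.Ioi 1)) {l : ℝ} (hl : 0 < l) :
    IntegrableOn (fun r => (1 - Real.exp (-l * r)) * (pb r / (c * r))) (Set.Ioi 0) := by
  rw [show Set.Ioi (0:ℝ) = Set.Ioc 0 1 ∪ Set.Ioi 1 from (Set.Ioc_union_Ioi_eq_Ioi zero_le_one).symm]
  refine IntegrableOn.union ?_ ?_
  · refine Integrable.mono' (g := fun _ => l * ρ / c) (integrableOn_const measure_Ioc_lt_top.ne)
      (f_meas hc hmono l Set.Ioc_subset_Ioi_self) ?_
    filter_upwards [ae_restrict_mem measurableSet_Ioc] with r hr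
    rw [Real.norm_of_nonneg (f_nonneg hc hpos hl.le hr.1)]
    exact f_le_const hc hmono hpos hρ hl hr.1
  · refine Integrable.mono' (hint.const_mul c⁻¹)
      (f_meas hc hmono l (Set.Ioi_subset_Ioi zero_le_one)) ?_
    filter_upwards [ae_restrict_mem measurableSet_Ioi] with r hr
    have hr0 : (0:ℝ) < r := lt_trans zero_lt_one hr
    rw [Real.norm_of_nonneg (f_nonneg hc hpos hl.le hr0)]
    exact f_le_tail hc hpos hl.le hr0

-- FTC computation: ∫_{Ioc (1/l) x} (1/r - l e^{-lr}) dr = log(lx) + e^{-lx} - e^{-1}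
lemma ftc_piece {l x : ℝ} (hl : 0 < l) (hx : 0 < x) (hlx : 1/l ≤ x) :
    ∫ r in Set.Ioc (1/l) x, (1/r - l * Real.exp (-l * r))
      = Real.log l + Real.log x + Real.exp (-l*x) - Real.exp (-1) := by
  have h0 : (0:ℝ) < 1/l := by positivity
  have hderiv : ∀ r ∈ Set.uIcc (1/l) x, HasDerivAt (fun t => Real.log t + Real.exp (-l*t))
      (1/r - l * Real.exp (-l * r)) r := by
    intro r hr
    rw [Set.uIcc_of_le hlx] at hr
    have hr0 : 0 < r := lt_of_lt_of_le h0 hr.1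
    have h1 : HasDerivAt Real.log r⁻¹ r := Real.hasDerivAt_log hr0.ne'
    have h2 : HasDerivAt (fun t : ℝ => -l * t) (-l) r := by
      simpa using (hasDerivAt_id r).const_mul (-l)
    have := h1.add h2.exp
    refine this.congr_deriv ?_
    rw [one_div]; ring
  have hcont : IntervalIntegrable (fun r => 1/r - l * Real.exp (-l * r)) volume (1/l) x := by
    apply ContinuousOn.intervalIntegrable
    rw [Set.uIcc_of_le hlx]
    apply ContinuousOn.sub
    · exact continuousOn_const.div continuousOn_id (fun r hr => (lt_of_lt_of_le h0 hr.1).ne')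
    · exact (continuousOn_const.mul ((Real.continuous_exp.comp (continuous_const.mul continuous_id)).continuousOn))
  have := intervalIntegral.integral_eq_sub_of_hasDerivAt hderiv hcont
  rw [intervalIntegral.integral_of_le hlx] at this
  rw [this]
  have : -l * (1/l) = -1 := by field_simp
  rw [this, Real.log_div one_ne_zero hl.ne', Real.log_one]
  ring

lemma lower_bound {c ρ : ℝ} (hc : 0 < c) {pb : ℝ → ℝ} (hmono : AntitoneOn pb (Set.Ioi 0))
    (hpos : ∀ r > (0:ℝ), 0 ≤ pb r)
    (hρ : Tendsto pb (nhdsWithin 0 (Set.Ioi 0)) (nhds ρ))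
    (hint : IntegrableOn (fun r => pb r / r) (Set.Ioi 1))
    {x : ℝ} (hx : x ∈ Set.Ioo (0:ℝ) 1) {l : ℝ} (hl : 1/x ≤ l) :
    (pb x / c) * (Real.log l + Real.log x - Real.exp (-1))
      ≤ ∫ r in Set.Ioi (0:ℝ), (1 - Real.exp (-l * r)) * (pb r / (c * r)) := by
  obtain ⟨hx0, hx1⟩ := hx
  have hl0 : 0 < l := lt_of_lt_of_le (by positivity) hl
  have hlx : 1/l ≤ x := by
    rw [div_le_iff₀ hl0]
    rw [div_le_iff₀ hx0] at hl
    nlinarith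
  have h1l : (0:ℝ) < 1/l := by positivity
  have hpbx : 0 ≤ pb x := hpos x hx0
  have hInt := f_integrable hc hmono hpos hρ hint hl0 (c := c)
  -- pointwise bound on Ioc (1/l) x
  have hpw : ∀ r ∈ Set.Ioc (1/l) x, (pb x / c) * (1/r - l * Real.exp (-l * r))
      ≤ (1 - Real.exp (-l * r)) * (pb r / (c * r)) := by
    intro r hr
    have hr0 : 0 < r := lt_trans h1l hr.1
    have hrl : 1/r ≤ l := by
      rw [div_le_iff₀ hr0]
      have := hr.1
      rw [div_lt_iff₀ hl0] at this
      nlinarith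
    have hexp : 0 < Real.exp (-l * r) := Real.exp_pos _
    have hb := (one_sub_exp_mem (t := l * r) (by positivity)).1
    have hb' : 0 ≤ 1 - Real.exp (-l * r) := by rw [show -l*r = -(l*r) by ring]; exact hb
    have hpbr : pb x ≤ pb r := hmono hr0 hx0 hr.2
    have step1 : 1/r - l * Real.exp (-l * r) ≤ (1 - Real.exp (-l * r)) / r := by
      have key : Real.exp (-l*r)/r ≤ l * Real.exp (-l*r) := by
        rw [div_le_iff₀ hr0]
        have h1lr : 1 ≤ l * r := by rw [div_le_iff₀ hr0] at hrl; linarith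
        nlinarith [h1lr, hexp]
      have heq : (1 - Real.exp (-l*r))/r = 1/r - Real.exp (-l*r)/r := by ring
      rw [heq]; linarith
    calc (pb x / c) * (1/r - l * Real.exp (-l * r))
        ≤ (pb x / c) * ((1 - Real.exp (-l * r)) / r) := by
          apply mul_le_mul_of_nonneg_left step1 (by positivity)
      _ ≤ (pb r / c) * ((1 - Real.exp (-l * r)) / r) := by
          apply mul_le_mul_of_nonneg_right (by gcongr) (by positivity)
      _ = (1 - Real.exp (-l * r)) * (pb r / (c * r)) := by
          field_simp
  -- integrability of LHS integrand on Ioc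
  have hIntL : IntegrableOn (fun r => (pb x / c) * (1/r - l * Real.exp (-l * r))) (Set.Ioc (1/l) x) := by
    apply (ContinuousOn.integrableOn_Icc ?_).mono_set Set.Ioc_subset_Icc_self
    apply ContinuousOn.mul continuousOn_const
    apply ContinuousOn.sub
    · exact continuousOn_const.div continuousOn_id (fun r hr => (lt_of_lt_of_le h1l hr.1).ne')
    · exact continuousOn_const.mul ((Real.continuous_exp.comp (continuous_const.mul continuous_id)).continuousOn)
  have hIntR : IntegrableOn (fun r => (1 - Real.exp (-l * r)) * (pb r / (c * r))) (Set.Ioc (1/l) x) :=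
    hInt.mono_set (fun r hr => lt_trans h1l hr.1)
  have step2 : ∫ r in Set.Ioc (1/l) x, (pb x / c) * (1/r - l * Real.exp (-l * r))
      ≤ ∫ r in Set.Ioc (1/l) x, (1 - Real.exp (-l * r)) * (pb r / (c * r)) :=
    setIntegral_mono_on hIntL hIntR measurableSet_Ioc hpw
  have step3 : ∫ r in Set.Ioc (1/l) x, (1 - Real.exp (-l * r)) * (pb r / (c * r))
      ≤ ∫ r in Set.Ioi (0:ℝ), (1 - Real.exp (-l * r)) * (pb r / (c * r)) := by
    apply setIntegral_mono_set hInt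
    · filter_upwards [ae_restrict_mem measurableSet_Ioi] with r hr
      exact f_nonneg hc hpos hl0.le hr
    · exact HasSubset.Subset.eventuallyLE (fun r hr => lt_trans h1l hr.1)
  have step0 : ∫ r in Set.Ioc (1/l) x, (pb x / c) * (1/r - l * Real.exp (-l * r))
      = (pb x / c) * (Real.log l + Real.log x + Real.exp (-l*x) - Real.exp (-1)) := by
    rw [MeasureTheory.integral_const_mul, ftc_piece hl0 hx0 hlx]
  have hfin : (pb x / c) * (Real.log l + Real.log x - Real.exp (-1))
      ≤ (pb x / c) * (Real.log l + Real.log x + Real.exp (-l*x) - Real.exp (-1)) := by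
    apply mul_le_mul_of_nonneg_left _ (by positivity)
    have := Real.exp_pos (-l*x)
    linarith
  linarith [step0 ▸ step2, step3]

lemma f_le_tail' {c : ℝ} (hc : 0 < c) {pb : ℝ → ℝ} (hpos : ∀ r > (0:ℝ), 0 ≤ pb r)
    {l : ℝ} (hl : 0 ≤ l) {r : ℝ} (hr : 0 < r) :
    (1 - Real.exp (-l * r)) * (pb r / (c * r)) ≤ c⁻¹ * (pb r / r) := by
  have hb := one_sub_exp_mem (t := l * r) (mul_nonneg hl hr.le)
  have h1 : (1 : ℝ) - Real.exp (-l * r) ≤ 1 := by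
    rw [show -l * r = -(l * r) by ring]; exact hb.2.1
  calc (1 - Real.exp (-l * r)) * (pb r / (c * r))
      ≤ 1 * (pb r / (c * r)) :=
        mul_le_mul_of_nonneg_right h1 (div_nonneg (hpos r hr) (by positivity))
    _ = c⁻¹ * (pb r / r) := by field_simp

lemma upper_bound {c ρ : ℝ} (hc : 0 < c) {pb : ℝ → ℝ} (hmono : AntitoneOn pb (Set.Ioi 0))
    (hpos : ∀ r > (0:ℝ), 0 ≤ pb r)
    (hρ : Tendsto pb (nhdsWithin 0 (Set.Ioi 0)) (nhds ρ))
    (hint : IntegrableOn (fun r => pb r / r) (Set.Ioi 1))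
    (hfc : ∀ {l : ℝ}, 0 < l → ∀ {r : ℝ}, 0 < r →
      (1 - Real.exp (-l * r)) * (pb r / (c * r)) ≤ l * ρ / c)
    {l : ℝ} (hl : 1 ≤ l) :
    ∫ r in Set.Ioi (0:ℝ), (1 - Real.exp (-l * r)) * (pb r / (c * r))
      ≤ ρ/c + (ρ/c) * Real.log l + ∫ r in Set.Ioi (1:ℝ), c⁻¹ * (pb r / r) := by
  have hl0 : (0:ℝ) < l := lt_of_lt_of_le zero_lt_one hl
  have h1l0 : (0:ℝ) < 1/l := by positivity
  have h1l1 : 1/l ≤ 1 := by rw [div_le_one hl0]; exact hl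
  have hInt := f_integrable hc hmono hpos hρ hint hl0 (c := c)
  have hrho : 0 ≤ ρ := le_trans (hpos 1 zero_lt_one) (pb_le_rho hmono hρ zero_lt_one)
  -- split Ioi 0
  have hsplit : ∫ r in Set.Ioi (0:ℝ), (1 - Real.exp (-l * r)) * (pb r / (c * r))
      = (∫ r in Set.Ioc (0:ℝ) 1, (1 - Real.exp (-l * r)) * (pb r / (c * r)))
        + ∫ r in Set.Ioi (1:ℝ), (1 - Real.exp (-l * r)) * (pb r / (c * r)) := by
    rw [show Set.Ioi (0:ℝ) = Set.Ioc 0 1 ∪ Set.Ioi 1 from (Set.Ioc_union_Ioi_eq_Ioi zero_le_one).symm]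
    exact setIntegral_union (Set.Ioc_disjoint_Ioi le_rfl) measurableSet_Ioi
      (hInt.mono_set (by rw [(Set.Ioc_union_Ioi_eq_Ioi (zero_le_one (α := ℝ))).symm]; exact Set.subset_union_left))
      (hInt.mono_set (by rw [(Set.Ioc_union_Ioi_eq_Ioi (zero_le_one (α := ℝ))).symm]; exact Set.subset_union_right))
  have hsplit2 : ∫ r in Set.Ioc (0:ℝ) 1, (1 - Real.exp (-l * r)) * (pb r / (c * r))
      = (∫ r in Set.Ioc (0:ℝ) (1/l), (1 - Real.exp (-l * r)) * (pb r / (c * r)))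
        + ∫ r in Set.Ioc (1/l) 1, (1 - Real.exp (-l * r)) * (pb r / (c * r)) := by
    rw [show Set.Ioc (0:ℝ) 1 = Set.Ioc 0 (1/l) ∪ Set.Ioc (1/l) 1 from
      (Set.Ioc_union_Ioc_eq_Ioc h1l0.le h1l1).symm]
    refine setIntegral_union (Set.Ioc_disjoint_Ioc_of_le le_rfl) measurableSet_Ioc
      (hInt.mono_set (fun r hr => hr.1)) (hInt.mono_set (fun r hr => lt_trans h1l0 hr.1))
  -- tail bound
  have htail : ∫ r in Set.Ioi (1:ℝ), (1 - Real.exp (-l * r)) * (pb r / (c * r))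
      ≤ ∫ r in Set.Ioi (1:ℝ), c⁻¹ * (pb r / r) := by
    refine setIntegral_mono_on (hInt.mono_set (Set.Ioi_subset_Ioi zero_le_one))
      (hint.const_mul c⁻¹) measurableSet_Ioi ?_
    exact fun r hr => f_le_tail' hc hpos hl0.le (lt_trans zero_lt_one hr)
  -- small piece bound
  have hsmall : ∫ r in Set.Ioc (0:ℝ) (1/l), (1 - Real.exp (-l * r)) * (pb r / (c * r)) ≤ ρ/c := by
    have : ∫ r in Set.Ioc (0:ℝ) (1/l), (1 - Real.exp (-l * r)) * (pb r / (c * r))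
        ≤ ∫ _ in Set.Ioc (0:ℝ) (1/l), (l * ρ / c) := by
      refine setIntegral_mono_on (hInt.mono_set (fun r hr => hr.1))
        (integrableOn_const measure_Ioc_lt_top.ne) measurableSet_Ioc ?_
      exact fun r hr => hfc hl0 hr.1
    rw [setIntegral_const, Real.volume_real_Ioc_of_le h1l0.le, smul_eq_mul,
      sub_zero] at this
    calc ∫ r in Set.Ioc (0:ℝ) (1/l), (1 - Real.exp (-l * r)) * (pb r / (c * r))
        ≤ 1/l * (l * ρ / c) := this
      _ = ρ/c := by field_simp
  -- middle piece bound
  have hmid : ∫ r in Set.Ioc (1/l) 1, (1 - Real.exp (-l * r)) * (pb r / (c * r))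
      ≤ (ρ/c) * Real.log l := by
    have hpw : ∀ r ∈ Set.Ioc (1/l) 1, (1 - Real.exp (-l * r)) * (pb r / (c * r))
        ≤ (ρ/c) * (1/r) := by
      intro r hr
      have hr0 : 0 < r := lt_trans h1l0 hr.1
      calc (1 - Real.exp (-l * r)) * (pb r / (c * r)) ≤ c⁻¹ * (pb r / r) :=
            f_le_tail' hc hpos hl0.le hr0
        _ ≤ c⁻¹ * (ρ / r) := by gcongr; exact pb_le_rho hmono hρ hr0
        _ = (ρ/c) * (1/r) := by field_simp
    have hIntR : IntegrableOn (fun r => (ρ/c) * (1/r)) (Set.Ioc (1/l) 1) := by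
      apply (ContinuousOn.integrableOn_Icc ?_).mono_set Set.Ioc_subset_Icc_self
      exact continuousOn_const.mul (continuousOn_const.div continuousOn_id
        (fun r hr => (lt_of_lt_of_le h1l0 hr.1).ne'))
    have := setIntegral_mono_on (hInt.mono_set (fun r hr => lt_trans h1l0 hr.1))
      hIntR measurableSet_Ioc hpw
    refine le_trans this (le_of_eq ?_)
    rw [← intervalIntegral.integral_of_le h1l1, intervalIntegral.integral_const_mul,
      integral_one_div]
    · rw [one_div_one_div]
    · rw [Set.uIcc_of_le h1l1]
      exact fun h => absurd h.1 (not_le.mpr h1l0)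
  rw [hsplit, hsplit2]
  linarith

lemma m_integral_mono {c ρ : ℝ} (hc : 0 < c) {pb : ℝ → ℝ} (hmono : AntitoneOn pb (Set.Ioi 0))
    (hpos : ∀ r > (0:ℝ), 0 ≤ pb r)
    (hρ : Tendsto pb (nhdsWithin 0 (Set.Ioi 0)) (nhds ρ))
    (hint : IntegrableOn (fun r => pb r / r) (Set.Ioi 1))
    {l1 l2 : ℝ} (h1 : 0 < l1) (h12 : l1 ≤ l2) :
    ∫ r in Set.Ioi (0:ℝ), (1 - Real.exp (-l1 * r)) * (pb r / (c * r))
      ≤ ∫ r in Set.Ioi (0:ℝ), (1 - Real.exp (-l2 * r)) * (pb r / (c * r)) := by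
  refine setIntegral_mono_on (f_integrable hc hmono hpos hρ hint h1)
    (f_integrable hc hmono hpos hρ hint (lt_of_lt_of_le h1 h12)) measurableSet_Ioi ?_
  intro r hr
  have hr0 : (0:ℝ) < r := hr
  have : Real.exp (-l2 * r) ≤ Real.exp (-l1 * r) := by
    apply Real.exp_le_exp.mpr; nlinarith
  apply mul_le_mul_of_nonneg_right (by linarith)
    (div_nonneg (hpos r hr0) (by positivity))

/-- Under the hypotheses of Statement 9 (with drift `δ = 0`), the integral
`∫_1^∞ e^{m(λ)} dλ` is finite iff `ρ > c`. -/
theorem stmt_11 (c ρ : ℝ) (hc : 0 < c)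
    (pb : ℝ → ℝ) (hmono : AntitoneOn pb (Set.Ioi 0)) (hpos : ∀ r > (0:ℝ), 0 ≤ pb r)
    (hρ : Tendsto pb (nhdsWithin 0 (Set.Ioi 0)) (nhds ρ))
    (hint : IntegrableOn (fun r => pb r / r) (Set.Ioi 1))
    (m : ℝ → ℝ)
    (hm : ∀ l : ℝ, m l = -∫ r in Set.Ioi (0:ℝ), (1 - Real.exp (-l * r)) * (pb r / (c * r))) :
    IntegrableOn (fun l => Real.exp (m l)) (Set.Ioi 1) ↔ c < ρ := by
  have hanti : AntitoneOn (fun l => Real.exp (m l)) (Set.Ioi 1) := by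
    intro l1 h1 l2 h2 h12
    apply Real.exp_le_exp.mpr
    rw [hm l1, hm l2, neg_le_neg_iff]
    exact m_integral_mono hc hmono hpos hρ hint (lt_trans zero_lt_one h1) h12
  have hmeas : AEStronglyMeasurable (fun l => Real.exp (m l)) (volume.restrict (Set.Ioi 1)) :=
    (aemeasurable_restrict_of_antitoneOn measurableSet_Ioi hanti).aestronglyMeasurable
  have hm_le : ∀ l : ℝ, 0 < l → Real.exp (m l) ≤ 1 := by
    intro l hl
    rw [Real.exp_le_one_iff, hm l, neg_nonpos]
    exact setIntegral_nonneg measurableSet_Ioi (fun r hr => f_nonneg hc hpos hl.le hr)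
  constructor
  · -- integrable → c < ρ
    intro hInt
    by_contra hcon
    push_neg at hcon
    set K := ∫ r in Set.Ioi (1:ℝ), c⁻¹ * (pb r / r) with hK
    have hlow : ∀ l : ℝ, 1 < l → Real.exp (-(1+K)) * l^(-1:ℝ) ≤ Real.exp (m l) := by
      intro l hl
      have hl0 : (0:ℝ) < l := lt_trans zero_lt_one hl
      have hub := upper_bound hc hmono hpos hρ hint
        (fun {l'} hl' {r} hr => f_le_const hc hmono hpos hρ hl' hr) hl.le
      have hlog : 0 ≤ Real.log l := Real.log_nonneg hl.le
      have hrc : ρ/c ≤ 1 := by rw [div_le_one hc]; exact hcon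
      have hrho0 : 0 ≤ ρ := le_trans (hpos 1 zero_lt_one) (pb_le_rho hmono hρ zero_lt_one)
      have hrc0 : 0 ≤ ρ/c := by positivity
      have h2 : (∫ r in Set.Ioi (0:ℝ), (1 - Real.exp (-l * r)) * (pb r / (c * r)))
          ≤ 1 + Real.log l + K := by
        have : (ρ/c) * Real.log l ≤ Real.log l := by nlinarith
        linarith
      have hmlb : -(1+K) - Real.log l ≤ m l := by rw [hm l]; linarith
      calc Real.exp (-(1+K)) * l^(-1:ℝ) = Real.exp (-(1+K) - Real.log l) := by
            rw [Real.exp_sub, Real.exp_log hl0, Real.rpow_neg_one, div_eq_mul_inv]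
        _ ≤ Real.exp (m l) := Real.exp_le_exp.mpr hmlb
    have hIntC : IntegrableOn (fun l : ℝ => Real.exp (-(1+K)) * l^(-1:ℝ)) (Set.Ioi 1) := by
      refine Integrable.mono' hInt
        ((measurable_const.mul (measurable_id.pow_const _)).aestronglyMeasurable) ?_
      filter_upwards [ae_restrict_mem measurableSet_Ioi] with l hl
      have hl0 : (0:ℝ) < l := lt_trans zero_lt_one hl
      rw [Real.norm_of_nonneg (by positivity)]
      exact hlow l hl
    have h3 : IntegrableOn (fun l : ℝ => l^(-1:ℝ)) (Set.Ioi 1) := by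
      have := hIntC.const_mul (Real.exp (-(1+K)))⁻¹
      simp [inv_mul_cancel_left₀ (Real.exp_ne_zero (-(1+K)))] at this; exact this
    rw [integrableOn_Ioi_rpow_iff zero_lt_one] at h3
    linarith
  · -- c < ρ → integrable
    intro hcρ
    have hev : ∀ᶠ s in nhdsWithin 0 (Set.Ioi 0), c < pb s := hρ.eventually (eventually_gt_nhds hcρ)
    have hmem : ∀ᶠ s in nhdsWithin 0 (Set.Ioi 0), s ∈ Set.Ioo (0:ℝ) 1 :=
      eventually_of_mem (Ioo_mem_nhdsGT_of_mem ⟨le_rfl, zero_lt_one⟩) (fun y hy => hy)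
    obtain ⟨x, hxc, hxm⟩ := (hev.and hmem).exists
    obtain ⟨hx0, hx1⟩ := hxm
    set α := pb x / c with hα
    have hα1 : 1 < α := (one_lt_div hc).mpr hxc
    set M := max (1/x) 2 with hM
    have hM2 : (2:ℝ) ≤ M := le_max_right _ _
    have hM1 : (1:ℝ) < M := lt_of_lt_of_le one_lt_two hM2
    have hM0 : (0:ℝ) < M := lt_trans zero_lt_one hM1
    have hMx : 1/x ≤ M := le_max_left _ _
    set C2 := Real.exp (α * Real.exp (-1) - α * Real.log x) with hC2
    have hbound : ∀ l : ℝ, M < l → Real.exp (m l) ≤ C2 * l^(-α) := by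
      intro l hl
      have hl0 : (0:ℝ) < l := lt_trans hM0 hl
      have hlx : 1/x ≤ l := le_trans hMx hl.le
      have hlb := lower_bound hc hmono hpos hρ hint ⟨hx0, hx1⟩ hlx
      have hml : m l ≤ α * Real.exp (-1) - α * Real.log x - α * Real.log l := by
        rw [hm l]
        have : α * (Real.log l + Real.log x - Real.exp (-1))
            ≤ ∫ r in Set.Ioi (0:ℝ), (1 - Real.exp (-l * r)) * (pb r / (c * r)) := hlb
        linarith [this]
      calc Real.exp (m l) ≤ Real.exp (α * Real.exp (-1) - α * Real.log x - α * Real.log l) :=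
            Real.exp_le_exp.mpr hml
        _ = C2 * l^(-α) := by
            rw [Real.exp_sub, Real.rpow_def_of_pos hl0, div_eq_mul_inv, ← Real.exp_neg]
            congr 1
            ring
    rw [show Set.Ioi (1:ℝ) = Set.Ioc 1 M ∪ Set.Ioi M from (Set.Ioc_union_Ioi_eq_Ioi hM1.le).symm]
    refine IntegrableOn.union ?_ ?_
    · refine Integrable.mono' (g := fun _ => (1:ℝ))
        (integrableOn_const measure_Ioc_lt_top.ne)
        (hmeas.mono_measure (Measure.restrict_mono Set.Ioc_subset_Ioi_self le_rfl)) ?_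
      filter_upwards [ae_restrict_mem measurableSet_Ioc] with l hl
      rw [Real.norm_of_nonneg (Real.exp_pos _).le]
      exact hm_le l (lt_trans zero_lt_one hl.1)
    · refine Integrable.mono' ((integrableOn_Ioi_rpow_of_lt (a := -α) (by linarith) hM0).const_mul C2)
        (hmeas.mono_measure (Measure.restrict_mono (Set.Ioi_subset_Ioi hM1.le) le_rfl)) ?_
      filter_upwards [ae_restrict_mem measurableSet_Ioi] with l hl
      rw [Real.norm_of_nonneg (Real.exp_pos _).le]
      exact hbound l hl
end

section
/- Integration-by-parts identity for the Riccati solution: let $q>0$, $r$ continuous and positive on $(0,\infty)$, and let $w:(0,\infty)\to(0,\infty)$ be differentiable with $w' - w^2 = -qr^2$, $\int_0^1 w < \infty$, and $w(s)\to0$ as $s\to\infty$. Then for every $T>0$, $\int_0^T dt\, e^{\int_0^t w(z)dz} \int_t^\infty ds\, q r^2(s)\, e^{-\int_t^s w(z)dz} = e^{\int_0^T w(z)dz} - 1$, provided $\int_t^\infty qr^2(s)e^{-\int_t^s w}ds$ converges for each $t$. -/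
open MeasureTheory Set Filter

/-- Integration-by-parts identity for the Riccati solution: if `w > 0` solves
`w' - w² = -q r²` on `(0,∞)`, is integrable near `0`, and tends to `0` at `∞`, then for
every `T > 0`,
`∫_0^T e^{∫_0^t w} (∫_t^∞ q r(s)² e^{-∫_t^s w} ds) dt = e^{∫_0^T w} - 1`. -/
theorem stmt_16 (q : ℝ) (hq : 0 < q) (r w : ℝ → ℝ)
    (hrc : ContinuousOn r (Set.Ioi 0)) (hrpos : ∀ t > (0:ℝ), 0 < r t)
    (hwpos : ∀ t > (0:ℝ), 0 < w t)
    (hw : ∀ t > (0:ℝ), HasDerivAt w (w t ^ 2 - q * r t ^ 2) t)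
    (hwint : IntegrableOn w (Set.Ioc 0 1))
    (hw0 : Tendsto w atTop (nhds 0))
    (hconv : ∀ t > (0:ℝ), IntegrableOn
      (fun s => q * r s ^ 2 * Real.exp (-(∫ z in t..s, w z))) (Set.Ioi t))
    (T : ℝ) (hT : 0 < T) :
    (∫ t in (0:ℝ)..T, Real.exp (∫ z in (0:ℝ)..t, w z) *
        ∫ s in Set.Ioi t, q * r s ^ 2 * Real.exp (-(∫ z in t..s, w z))) =
      Real.exp (∫ z in (0:ℝ)..T, w z) - 1 := by
  have hwc : ContinuousOn w (Set.Ioi 0) := fun x hx =>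
    ((hw x hx).continuousAt).continuousWithinAt
  -- integrability of w on Ioc 0 b for any b > 0
  have hWint : ∀ b : ℝ, 0 < b → IntegrableOn w (Set.Ioc 0 b) := by
    intro b hb
    rcases le_or_gt b 1 with h | h
    · exact hwint.mono_set (Set.Ioc_subset_Ioc_right h)
    · have h1 : IntegrableOn w (Set.Icc 1 b) :=
        (hwc.mono (fun x hx => lt_of_lt_of_le one_pos hx.1)).integrableOn_compact isCompact_Icc
      have hsub : Set.Ioc 0 b ⊆ Set.Ioc 0 1 ∪ Set.Icc 1 b := by
        intro x hx
        rcases le_or_gt x 1 with hx1 | hx1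
        · exact Or.inl ⟨hx.1, hx1⟩
        · exact Or.inr ⟨hx1.le, hx.2⟩
      exact (hwint.union h1).mono_set hsub
  -- the inner integral equals w t
  have hinner : ∀ t : ℝ, 0 < t →
      (∫ s in Set.Ioi t, q * r s ^ 2 * Real.exp (-(∫ z in t..s, w z))) = w t := by
    intro t ht
    have hgd : ∀ x ∈ Set.Ici t, HasDerivAt (fun u => ∫ z in t..u, w z) (w x) x := by
      intro x hx
      have hx0 : 0 < x := lt_of_lt_of_le ht hx
      refine intervalIntegral.integral_hasDerivAt_right ?_ ?_ ((hw x hx0).continuousAt)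
      · apply ContinuousOn.intervalIntegrable
        apply hwc.mono
        intro y hy
        rcases Set.mem_uIcc.mp hy with h' | h'
        · exact lt_of_lt_of_le ht h'.1
        · exact lt_of_lt_of_le hx0 h'.1
      · exact ContinuousOn.stronglyMeasurableAtFilter isOpen_Ioi hwc x hx0
    have hFd : ∀ x ∈ Set.Ici t,
        HasDerivAt (fun u => -(w u * Real.exp (-(∫ z in t..u, w z))))
          (q * r x ^ 2 * Real.exp (-(∫ z in t..x, w z))) x := by
      intro x hx
      have hx0 : 0 < x := lt_of_lt_of_le ht hx
      have hexp : HasDerivAt (fun u => Real.exp (-(∫ z in t..u, w z)))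
          (Real.exp (-(∫ z in t..x, w z)) * (-(w x))) x := ((hgd x hx).neg).exp
      have hprod := ((hw x hx0).mul hexp).neg
      refine hprod.congr_deriv ?_
      ring
    have hnn : ∀ s : ℝ, t ≤ s → 0 ≤ ∫ z in t..s, w z := by
      intro s hs
      apply intervalIntegral.integral_nonneg hs
      intro u hu
      exact (hwpos u (lt_of_lt_of_le ht hu.1)).le
    have hF0 : Tendsto (fun u => -(w u * Real.exp (-(∫ z in t..u, w z)))) atTop (nhds 0) := by
      have h1 : Tendsto (fun u => -(w u)) atTop (nhds 0) := by
        simpa using hw0.neg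
      refine tendsto_of_tendsto_of_tendsto_of_le_of_le' h1 tendsto_const_nhds ?_ ?_
      · filter_upwards [eventually_ge_atTop t] with s hs
        have h2 : Real.exp (-(∫ z in t..s, w z)) ≤ 1 := by
          rw [Real.exp_le_one_iff]
          linarith [hnn s hs]
        have h3 : 0 < w s := hwpos s (lt_of_lt_of_le ht hs)
        nlinarith [Real.exp_pos (-(∫ z in t..s, w z))]
      · filter_upwards [eventually_ge_atTop t] with s hs
        have h3 : 0 < w s := hwpos s (lt_of_lt_of_le ht hs)
        nlinarith [Real.exp_pos (-(∫ z in t..s, w z))]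
    have := MeasureTheory.integral_Ioi_of_hasDerivAt_of_tendsto' hFd (hconv t ht) hF0
    rw [this]
    simp
  -- set up the outer integral
  set E : ℝ → ℝ := fun t => Real.exp (∫ z in (0:ℝ)..t, w z) with hE
  have hWT : IntegrableOn w (Set.Ioc 0 T) := hWint T hT
  have hWIcc : IntegrableOn w (Set.Icc 0 T) := by
    rwa [integrableOn_Icc_iff_integrableOn_Ioc]
  have hEcont : ContinuousOn E (Set.Icc 0 T) := by
    have h1 : ContinuousOn (fun x => ∫ z in (0:ℝ)..x, w z) (Set.Icc 0 T) := by
      have := intervalIntegral.continuousOn_primitive_interval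
        (a := (0:ℝ)) (b := T) (μ := volume) (f := w) (by rwa [Set.uIcc_of_le hT.le])
      rwa [Set.uIcc_of_le hT.le] at this
    exact Real.continuous_exp.comp_continuousOn h1
  have hEd : ∀ x ∈ Set.Ioo 0 T, HasDerivAt E (w x * E x) x := by
    intro x hx
    have hint : IntervalIntegrable w volume 0 x := by
      rw [intervalIntegrable_iff_integrableOn_Ioc_of_le hx.1.le]
      exact hWint x hx.1
    have h1 : HasDerivAt (fun u => ∫ z in (0:ℝ)..u, w z) (w x) x :=
      intervalIntegral.integral_hasDerivAt_right hint
        (ContinuousOn.stronglyMeasurableAtFilter isOpen_Ioi hwc x hx.1)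
        ((hw x hx.1).continuousAt)
    have := h1.exp
    rw [mul_comm] at this
    exact this
  have hbound : ∀ t ∈ Set.Ioc (0:ℝ) T, E t ≤ E T := by
    intro t ht'
    have hi1 : IntervalIntegrable w volume 0 t := by
      rw [intervalIntegrable_iff_integrableOn_Ioc_of_le ht'.1.le]
      exact hWint t ht'.1
    have hi2 : IntervalIntegrable w volume t T := by
      apply ContinuousOn.intervalIntegrable
      apply hwc.mono
      intro y hy
      rcases Set.mem_uIcc.mp hy with h' | h'
      · exact lt_of_lt_of_le ht'.1 h'.1
      · exact lt_of_lt_of_le hT h'.1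
    have hadd := intervalIntegral.integral_add_adjacent_intervals hi1 hi2
    have hnn : 0 ≤ ∫ z in t..T, w z := by
      apply intervalIntegral.integral_nonneg ht'.2
      intro u hu
      exact (hwpos u (lt_of_lt_of_le ht'.1 hu.1)).le
    simp only [hE]
    rw [Real.exp_le_exp]
    linarith
  have hintWE : IntervalIntegrable (fun t => w t * E t) volume 0 T := by
    rw [intervalIntegrable_iff_integrableOn_Ioc_of_le hT.le]
    have hmeas : AEStronglyMeasurable (fun t => w t * E t)
        (volume.restrict (Set.Ioc 0 T)) := by
      refine (hWT.aestronglyMeasurable).mul ?_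
      exact ((hEcont.mono Set.Ioc_subset_Icc_self).aestronglyMeasurable measurableSet_Ioc)
    refine Integrable.mono' (hWT.const_mul (E T)) hmeas ?_
    rw [MeasureTheory.ae_restrict_iff' measurableSet_Ioc]
    filter_upwards with t ht'
    have h1 : 0 < w t := hwpos t ht'.1
    have h2 : 0 < E t := Real.exp_pos _
    rw [Real.norm_eq_abs, abs_of_pos (mul_pos h1 h2)]
    have := hbound t ht'
    nlinarith
  have hcongr : (∫ t in (0:ℝ)..T, Real.exp (∫ z in (0:ℝ)..t, w z) *
        ∫ s in Set.Ioi t, q * r s ^ 2 * Real.exp (-(∫ z in t..s, w z))) =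
      ∫ t in (0:ℝ)..T, w t * E t := by
    rw [intervalIntegral.integral_of_le hT.le, intervalIntegral.integral_of_le hT.le]
    apply MeasureTheory.setIntegral_congr_fun measurableSet_Ioc
    intro t ht'
    dsimp only
    rw [hinner t ht'.1]
    exact mul_comm _ _
  rw [hcongr, intervalIntegral.integral_eq_sub_of_hasDerivAt_of_le hT.le hEcont hEd hintWE]
  simp [hE]
end

section
/- Let $q>0$ and let $r$ be continuous and positive on $(a,b)$ with $r$ monotone increasing and $r(t)\to+\infty$ as $t\to b-$ ($b<\infty$). If $f$ is a solution of $y'-y^2 = -qr^2$ with $f(T) \in [-\sqrt{q}\,r(T),\sqrt{q}\,r(T)]$ for some $T\in(a,b)$, then $f$ is defined on all of $[T,b)$, is decreasing there, and satisfies $f(t)^2 < q\,r(t)^2$ for all $t$ in a neighborhood of $b-$. -/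
open Set Filter

lemma riccati_barrier {a b q : ℝ} (hq : 0 < q) {r : ℝ → ℝ}
    (hrc : ContinuousOn r (Set.Ioo a b)) (hrpos : ∀ t ∈ Set.Ioo a b, 0 < r t)
    (hrmono : StrictMonoOn r (Set.Ioo a b))
    {T d : ℝ} (haT : a < T) (hTd : T < d) (hdb : d ≤ b)
    {g : ℝ → ℝ} (hg : ∀ t ∈ Set.Ico T d, HasDerivWithinAt g (g t ^ 2 - q * r t ^ 2) (Set.Ici T) t)
    (hgT : |g T| ≤ Real.sqrt q * r T) :
    ∀ t ∈ Set.Ico T d, |g t| ≤ Real.sqrt q * r t := by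
  have hsq : 0 < Real.sqrt q := Real.sqrt_pos.2 hq
  have hsub : ∀ {t₁ : ℝ}, t₁ ∈ Set.Ico T d → Set.Icc T t₁ ⊆ Set.Ioo a b := by
    intro t₁ ht₁ x hx
    exact ⟨haT.trans_le hx.1, lt_of_le_of_lt hx.2 (lt_of_lt_of_le ht₁.2 hdb)⟩
  intro t₁ ht₁
  rcases eq_or_lt_of_le ht₁.1 with h | hTt₁
  · rwa [← h]
  have hgc : ContinuousOn g (Set.Icc T t₁) := by
    intro t ht
    exact ((hg t ⟨ht.1, lt_of_le_of_lt ht.2 ht₁.2⟩).continuousWithinAt).mono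
      (Set.Icc_subset_Ici_self)
  have ht₁m : t₁ ∈ Set.Ioo a b := hsub ht₁ ⟨ht₁.1, le_refl _⟩
  have hcsq : ∀ t ∈ Set.Ioo a b, (Real.sqrt q * r t) ^ 2 = q * r t ^ 2 := by
    intro t ht
    rw [mul_pow, Real.sq_sqrt hq.le]
  rw [abs_le]
  constructor
  · -- lower bound
    by_contra hlt
    push_neg at hlt
    set C : Set ℝ := {t ∈ Set.Icc T t₁ | 0 ≤ g t + Real.sqrt q * r t} with hC
    have hCc : IsClosed C := by
      have h := ContinuousOn.preimage_isClosed_of_isClosed (f := fun t => g t + Real.sqrt q * r t)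
        (hgc.add (continuousOn_const.mul (hrc.mono (hsub ht₁)))) isClosed_Icc
        (isClosed_Ici (a := (0:ℝ)))
      exact h
    have hTC : T ∈ C := by
      refine ⟨⟨le_refl _, hTt₁.le⟩, ?_⟩
      have := (abs_le.1 hgT).1
      linarith
    have hCcomp : IsCompact C := isCompact_Icc.of_isClosed_subset hCc (fun x hx => hx.1)
    set s := sSup C with hs
    have hsC : s ∈ C := hCcomp.sSup_mem ⟨T, hTC⟩
    have hbddC : BddAbove C := hCcomp.bddAbove
    have hst₁ : s < t₁ := by
      rcases lt_or_eq_of_le hsC.1.2 with h | h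
      · exact h
      · exfalso
        have := hsC.2
        rw [h] at this
        linarith
    have hkey : ∀ t, s < t → t ≤ t₁ → g t < -(Real.sqrt q * r t) := by
      intro t hst htt₁
      by_contra hc
      push_neg at hc
      have : t ∈ C := ⟨⟨hsC.1.1.trans hst.le, htt₁⟩, by linarith⟩
      exact absurd (le_csSup hbddC this) (not_le.2 hst)
    have hmono : StrictMonoOn g (Set.Icc s t₁) := by
      apply strictMonoOn_of_deriv_pos (convex_Icc _ _)
        (hgc.mono (Set.Icc_subset_Icc_left hsC.1.1))
      intro x hx
      rw [interior_Icc] at hx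
      have hxm : x ∈ Set.Ico T d :=
        ⟨hsC.1.1.trans hx.1.le, lt_of_lt_of_le (hx.2.trans_le ht₁.2.le) (le_refl _)⟩
      have hda : HasDerivAt g (g x ^ 2 - q * r x ^ 2) x :=
        (hg x hxm).hasDerivAt (Ici_mem_nhds (lt_of_le_of_lt hsC.1.1 hx.1))
      rw [hda.deriv]
      have hxab : x ∈ Set.Ioo a b := hsub ht₁ ⟨hxm.1, hx.2.le⟩
      have h1 : g x < -(Real.sqrt q * r x) := hkey x hx.1 hx.2.le
      have h2 : 0 < Real.sqrt q * r x := mul_pos hsq (hrpos x hxab)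
      have h3 : (Real.sqrt q * r x) ^ 2 = q * r x ^ 2 := hcsq x hxab
      nlinarith
    have hss : s ∈ Set.Ioo a b := hsub ht₁ ⟨hsC.1.1, hsC.1.2⟩
    have hr : r s < r t₁ := hrmono hss ht₁m hst₁
    have := hmono ⟨le_refl _, hst₁.le⟩ ⟨hst₁.le, le_refl _⟩ hst₁
    have := hsC.2
    nlinarith
  · -- upper bound
    by_contra hlt
    push_neg at hlt
    set C : Set ℝ := {t ∈ Set.Icc T t₁ | 0 ≤ Real.sqrt q * r t - g t} with hC
    have hCc : IsClosed C := by
      have h := ContinuousOn.preimage_isClosed_of_isClosed (f := fun t => Real.sqrt q * r t - g t)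
        ((continuousOn_const.mul (hrc.mono (hsub ht₁))).sub hgc) isClosed_Icc
        (isClosed_Ici (a := (0:ℝ)))
      exact h
    have hTC : T ∈ C := by
      refine ⟨⟨le_refl _, hTt₁.le⟩, ?_⟩
      have := (abs_le.1 hgT).2
      linarith
    have hCcomp : IsCompact C := isCompact_Icc.of_isClosed_subset hCc (fun x hx => hx.1)
    set s := sSup C with hs
    have hsC : s ∈ C := hCcomp.sSup_mem ⟨T, hTC⟩
    have hbddC : BddAbove C := hCcomp.bddAbove
    have hst₁ : s < t₁ := by
      rcases lt_or_eq_of_le hsC.1.2 with h | h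
      · exact h
      · exfalso
        have := hsC.2
        rw [h] at this
        linarith
    have hkey : ∀ t, s < t → t ≤ t₁ → Real.sqrt q * r t < g t := by
      intro t hst htt₁
      by_contra hc
      push_neg at hc
      have : t ∈ C := ⟨⟨hsC.1.1.trans hst.le, htt₁⟩, by linarith⟩
      exact absurd (le_csSup hbddC this) (not_le.2 hst)
    have hss : s ∈ Set.Ioo a b := hsub ht₁ ⟨hsC.1.1, hsC.1.2⟩
    -- bound on g over [s, t₁]
    obtain ⟨M, hM⟩ := isCompact_Icc.exists_bound_of_continuousOn
      (hgc.mono (Set.Icc_subset_Icc_left hsC.1.1))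
    set c₀ := Real.sqrt q * r s with hc₀
    have hc₀pos : 0 < c₀ := mul_pos hsq (hrpos s hss)
    set K := M + c₀ with hKdef
    have hKpos : 0 < K := by
      have := hM s ⟨le_refl _, hst₁.le⟩
      have : 0 ≤ M := le_trans (norm_nonneg _) this
      linarith
    set φ : ℝ → ℝ := fun t => (g t - c₀) * Real.exp (-K * t) with hφ
    have hφanti : AntitoneOn φ (Set.Icc s t₁) := by
      apply antitoneOn_of_deriv_nonpos (convex_Icc _ _)
      · exact ((hgc.mono (Set.Icc_subset_Icc_left hsC.1.1)).sub continuousOn_const).mul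
          (Real.continuous_exp.comp (continuous_const.mul continuous_id)).continuousOn
      · intro x hx
        rw [interior_Icc] at hx
        have hxm : x ∈ Set.Ico T d := ⟨hsC.1.1.trans hx.1.le, hx.2.trans_le ht₁.2.le |>.trans_le (le_refl _)⟩
        have hda : HasDerivAt g (g x ^ 2 - q * r x ^ 2) x :=
          (hg x hxm).hasDerivAt (Ici_mem_nhds (lt_of_le_of_lt hsC.1.1 hx.1))
        have hexp : HasDerivAt (fun t : ℝ => Real.exp (-K * t)) (Real.exp (-K * x) * -K) x := by
          have h1 : HasDerivAt (fun t : ℝ => -K * t) (-K) x := by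
            simpa using (hasDerivAt_id x).const_mul (-K)
          exact h1.exp
        exact ((hda.sub_const c₀).mul hexp).differentiableAt.differentiableWithinAt
      · intro x hx
        rw [interior_Icc] at hx
        have hxm : x ∈ Set.Ico T d := ⟨hsC.1.1.trans hx.1.le, hx.2.trans_le ht₁.2.le |>.trans_le (le_refl _)⟩
        have hda : HasDerivAt g (g x ^ 2 - q * r x ^ 2) x :=
          (hg x hxm).hasDerivAt (Ici_mem_nhds (lt_of_le_of_lt hsC.1.1 hx.1))
        have hexp : HasDerivAt (fun t : ℝ => Real.exp (-K * t)) (Real.exp (-K * x) * -K) x := by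
          have h1 : HasDerivAt (fun t : ℝ => -K * t) (-K) x := by
            simpa using (hasDerivAt_id x).const_mul (-K)
          exact h1.exp
        have hφd : HasDerivAt φ ((g x ^ 2 - q * r x ^ 2) * Real.exp (-K * x)
            + (g x - c₀) * (Real.exp (-K * x) * -K)) x := (hda.sub_const c₀).mul hexp
        rw [hφd.deriv]
        have hxab : x ∈ Set.Ioo a b := hsub ht₁ ⟨hxm.1, hx.2.le⟩
        have h1 : Real.sqrt q * r x < g x := hkey x hx.1 hx.2.le
        have h2 : r s < r x := hrmono hss hxab hx.1
        have h3 : (Real.sqrt q * r x) ^ 2 = q * r x ^ 2 := hcsq x hxab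
        have h4 : ‖g x‖ ≤ M := hM x ⟨hx.1.le, hx.2.le⟩
        rw [Real.norm_eq_abs, abs_le] at h4
        have h5 : 0 < Real.exp (-K * x) := Real.exp_pos _
        -- goal: (g x ^ 2 - q r x ^2) * e + (g x - c₀) * (e * -K) ≤ 0
        have hc₀x : c₀ < Real.sqrt q * r x := by
          rw [hc₀]
          exact mul_lt_mul_of_pos_left h2 hsq
        have hgx : c₀ < g x := hc₀x.trans h1
        have hc₀sq : c₀ ^ 2 < q * r x ^ 2 := by nlinarith
        have hkeyineq : g x ^ 2 - q * r x ^ 2 - (g x - c₀) * K ≤ 0 := by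
          nlinarith [mul_nonneg (sub_nonneg.2 hgx.le) (sub_nonneg.2 h4.2)]
        have hfin := mul_nonpos_of_nonpos_of_nonneg hkeyineq (Real.exp_pos (-K * x)).le
        nlinarith [hfin]
    have hr : r s < r t₁ := hrmono hss ht₁m hst₁
    have h1 := hφanti ⟨le_refl _, hst₁.le⟩ ⟨hst₁.le, le_refl _⟩ hst₁.le
    have h2 : φ s ≤ 0 := by
      have := hsC.2
      have h5 : 0 < Real.exp (-K * s) := Real.exp_pos _
      simp only [hφ]
      nlinarith
    have h3 : 0 < φ t₁ := by
      have h5 : 0 < Real.exp (-K * t₁) := Real.exp_pos _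
      have h6 : c₀ < Real.sqrt q * r t₁ := by
        rw [hc₀]
        exact mul_lt_mul_of_pos_left hr hsq
      simp only [hφ]
      nlinarith
    linarith

lemma riccati_anti {a b q : ℝ} (hq : 0 < q) {r : ℝ → ℝ}
    (hrc : ContinuousOn r (Set.Ioo a b)) (hrpos : ∀ t ∈ Set.Ioo a b, 0 < r t)
    (hrmono : StrictMonoOn r (Set.Ioo a b))
    {T d : ℝ} (haT : a < T) (hTd : T < d) (hdb : d ≤ b)
    {g : ℝ → ℝ} (hg : ∀ t ∈ Set.Ico T d, HasDerivWithinAt g (g t ^ 2 - q * r t ^ 2) (Set.Ici T) t)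
    (hgT : |g T| ≤ Real.sqrt q * r T) :
    AntitoneOn g (Set.Ico T d) := by
  have hbar := riccati_barrier hq hrc hrpos hrmono haT hTd hdb hg hgT
  apply antitoneOn_of_deriv_nonpos (convex_Ico _ _)
  · exact fun t ht => ((hg t ht).continuousWithinAt).mono Set.Ico_subset_Ici_self
  · intro x hx
    rw [interior_Ico] at hx
    exact ((hg x ⟨hx.1.le, hx.2⟩).hasDerivAt
      (Ici_mem_nhds hx.1)).differentiableAt.differentiableWithinAt
  · intro x hx
    rw [interior_Ico] at hx
    have hda : HasDerivAt g (g x ^ 2 - q * r x ^ 2) x :=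
      (hg x ⟨hx.1.le, hx.2⟩).hasDerivAt (Ici_mem_nhds hx.1)
    rw [hda.deriv]
    have hxab : x ∈ Set.Ioo a b := ⟨haT.trans hx.1, hx.2.trans_le hdb⟩
    have h1 := abs_le.1 (hbar x ⟨hx.1.le, hx.2⟩)
    have h3 : (Real.sqrt q * r x) ^ 2 = q * r x ^ 2 := by
      rw [mul_pow, Real.sq_sqrt hq.le]
    nlinarith [h1.1, h1.2]

lemma riccati_unique_s19 {a b q : ℝ} (hq : 0 < q) {r : ℝ → ℝ}
    (hrc : ContinuousOn r (Set.Ioo a b)) (hrpos : ∀ t ∈ Set.Ioo a b, 0 < r t)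
    (hrmono : StrictMonoOn r (Set.Ioo a b))
    {T d₁ d₂ : ℝ} (haT : a < T) (hTd₁ : T < d₁) (hTd₂ : T < d₂) (hd₁b : d₁ ≤ b) (hd₂b : d₂ ≤ b)
    {g₁ g₂ : ℝ → ℝ}
    (hg₁ : ∀ t ∈ Set.Ico T d₁, HasDerivWithinAt g₁ (g₁ t ^ 2 - q * r t ^ 2) (Set.Ici T) t)
    (hg₂ : ∀ t ∈ Set.Ico T d₂, HasDerivWithinAt g₂ (g₂ t ^ 2 - q * r t ^ 2) (Set.Ici T) t)
    (hgT : |g₁ T| ≤ Real.sqrt q * r T) (heq : g₁ T = g₂ T) :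
    Set.EqOn g₁ g₂ (Set.Ico T (min d₁ d₂)) := by
  have hbar₁ := riccati_barrier hq hrc hrpos hrmono haT hTd₁ hd₁b hg₁ hgT
  have hbar₂ := riccati_barrier hq hrc hrpos hrmono haT hTd₂ hd₂b hg₂ (by rw [← heq]; exact hgT)
  intro t ht
  rcases eq_or_lt_of_le ht.1 with h | hTt
  · rw [← h]; exact heq
  have htab : t ∈ Set.Ioo a b := ⟨haT.trans hTt, lt_of_lt_of_le ht.2 (le_trans (min_le_left _ _) hd₁b)⟩
  set M := Real.sqrt q * r t with hM
  have hMpos : 0 < M := mul_pos (Real.sqrt_pos.2 hq) (hrpos t htab)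
  have hrmono' : ∀ u ∈ Set.Ico T t, Real.sqrt q * r u ≤ M := by
    intro u hu
    have huab : u ∈ Set.Ioo a b := ⟨haT.trans_le hu.1, hu.2.trans htab.2⟩
    exact mul_le_mul_of_nonneg_left (hrmono.monotoneOn huab htab hu.2.le) (Real.sqrt_nonneg q)
  have hlip : ∀ s : ℝ, LipschitzOnWith (Real.toNNReal (2 * M))
      (fun x : ℝ => x ^ 2 - q * r s ^ 2) (Set.Icc (-M) M) := by
    intro s
    rw [lipschitzOnWith_iff_dist_le_mul]
    intro x hx y hy
    rw [Real.dist_eq, Real.dist_eq]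
    have h2M : (Real.toNNReal (2 * M) : ℝ) = 2 * M := Real.coe_toNNReal _ (by linarith)
    rw [h2M]
    have : x ^ 2 - q * r s ^ 2 - (y ^ 2 - q * r s ^ 2) = (x + y) * (x - y) := by ring
    rw [this, abs_mul]
    apply mul_le_mul_of_nonneg_right _ (abs_nonneg _)
    calc |x + y| ≤ |x| + |y| := abs_add_le _ _
      _ ≤ 2 * M := by
          have hx' := abs_le.2 ⟨hx.1, hx.2⟩
          have hy' := abs_le.2 ⟨hy.1, hy.2⟩
          linarith
  have hcont : ∀ {g : ℝ → ℝ} {d : ℝ}, T < d →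
      (∀ u ∈ Set.Ico T d, HasDerivWithinAt g (g u ^ 2 - q * r u ^ 2) (Set.Ici T) u) →
      t < d → ContinuousOn g (Set.Icc T t) := by
    intro g d hTd hg htd u hu
    exact ((hg u ⟨hu.1, lt_of_le_of_lt hu.2 htd⟩).continuousWithinAt).mono Set.Icc_subset_Ici_self
  have htd₁ : t < d₁ := lt_of_lt_of_le ht.2 (min_le_left _ _)
  have htd₂ : t < d₂ := lt_of_lt_of_le ht.2 (min_le_right _ _)
  have key := ODE_solution_unique_of_mem_Icc_right (v := fun s x => x ^ 2 - q * r s ^ 2)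
    (s := fun _ => Set.Icc (-M) M) (K := Real.toNNReal (2 * M)) (fun s _ => hlip s)
    (hcont hTd₁ hg₁ htd₁)
    (fun u hu => (hg₁ u ⟨hu.1, hu.2.trans htd₁⟩).mono (Set.Ici_subset_Ici.2 hu.1))
    (fun u hu => by
      have := abs_le.1 (hbar₁ u ⟨hu.1, hu.2.trans htd₁⟩)
      have h2 := hrmono' u hu
      exact ⟨by linarith [this.1], by linarith [this.2]⟩)
    (hcont hTd₂ hg₂ htd₂)
    (fun u hu => (hg₂ u ⟨hu.1, hu.2.trans htd₂⟩).mono (Set.Ici_subset_Ici.2 hu.1))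
    (fun u hu => by
      have := abs_le.1 (hbar₂ u ⟨hu.1, hu.2.trans htd₂⟩)
      have h2 := hrmono' u hu
      exact ⟨by linarith [this.1], by linarith [this.2]⟩)
    heq
  exact key ⟨ht.1, le_refl t⟩
lemma left_deriv_ext {t₀ m L D : ℝ} {h φ : ℝ → ℝ} (ht₀m : t₀ < m)
    (hd : ∀ t ∈ Set.Ico t₀ m, HasDerivWithinAt h (φ t) (Set.Ici t₀) t)
    (hφ : Tendsto φ (nhdsWithin m (Set.Iio m)) (nhds D))
    (hL : Tendsto h (nhdsWithin m (Set.Iio m)) (nhds L)) :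
    HasDerivWithinAt (fun t => if t < m then h t else L) D (Set.Iic m) m := by
  set G : ℝ → ℝ := fun t => if t < m then h t else L with hG
  rw [hasDerivWithinAt_iff_tendsto_slope]
  have hset : Set.Iic m \ {m} = Set.Iio m := by
    ext x
    simp [lt_iff_le_and_ne]
  rw [hset]
  rw [Metric.tendsto_nhdsWithin_nhds]
  intro ε hε
  have hev : ∀ᶠ s in nhdsWithin m (Set.Iio m), |φ s - D| < ε / 2 := by
    have := Metric.tendsto_nhds.1 hφ (ε / 2) (by linarith)
    simpa [Real.dist_eq] using this
  rw [eventually_nhdsWithin_iff, Metric.eventually_nhds_iff] at hev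
  obtain ⟨δ, hδ, hδ'⟩ := hev
  set l := max t₀ (m - δ / 2) with hl
  have hlm : l < m := by
    apply max_lt ht₀m
    linarith
  have hlφ : ∀ s, l < s → s < m → |φ s - D| < ε / 2 := by
    intro s hls hsm
    apply hδ' _ hsm
    rw [Real.dist_eq, abs_lt]
    have h1 : m - δ / 2 ≤ l := le_max_right _ _
    constructor <;> nlinarith
  refine ⟨m - l, by linarith, ?_⟩
  intro t htm hdist
  rw [Real.dist_eq] at hdist
  rw [Set.mem_Iio] at htm
  have hlt : l < t := by
    rw [abs_lt] at hdist
    have := hdist.1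
    linarith
  have ht₀t : t₀ < t := lt_of_le_of_lt (le_max_left _ _) hlt
  set ψ : ℝ → ℝ := fun u => h u - D * u with hψ
  have hDu : ∀ u : ℝ, HasDerivAt (fun v : ℝ => D * v) D u := by
    intro u
    simpa using (hasDerivAt_id u).const_mul D
  have hψd : ∀ u ∈ Set.Ico t m, HasDerivWithinAt ψ (φ u - D) (Set.Ico t m) u := by
    intro u hu
    exact ((hd u ⟨ht₀t.le.trans hu.1, hu.2⟩).mono
      (fun x hx => ht₀t.le.trans hx.1)).sub ((hDu u).hasDerivWithinAt)
  have hbound : ∀ u ∈ Set.Ico t m, ‖φ u - D‖ ≤ ε / 2 := by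
    intro u hu
    rw [Real.norm_eq_abs]
    exact (hlφ u (hlt.trans_le hu.1) hu.2).le
  have hlip : ∀ y ∈ Set.Ico t m, |ψ y - ψ t| ≤ ε / 2 * (m - t) := by
    intro y hy
    have := Convex.norm_image_sub_le_of_norm_hasDerivWithin_le hψd hbound
      (convex_Ico t m) (Set.left_mem_Ico.2 htm)
      hy
    rw [Real.norm_eq_abs, Real.norm_eq_abs] at this
    have h2 : |y - t| ≤ m - t := by
      rw [abs_of_nonneg (by linarith [hy.1])]
      linarith [hy.2]
    calc |ψ y - ψ t| ≤ ε / 2 * |y - t| := this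
      _ ≤ ε / 2 * (m - t) := by nlinarith
  have hψlim : Tendsto ψ (nhdsWithin m (Set.Iio m)) (nhds (L - D * m)) := by
    exact hL.sub (((continuous_const.mul continuous_id).tendsto m).mono_left nhdsWithin_le_nhds)
  have hnum : |(L - D * m) - ψ t| ≤ ε / 2 * (m - t) := by
    have htend : Tendsto (fun y => |ψ y - ψ t|) (nhdsWithin m (Set.Iio m))
        (nhds (|(L - D * m) - ψ t|)) := by
      exact ((hψlim.sub tendsto_const_nhds).abs)
    apply le_of_tendsto htend
    filter_upwards [Ico_mem_nhdsLT (show t < m from htm)] with y hy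
    exact hlip y hy
  -- conclude
  have htm' : t - m ≠ 0 := by intro hc; linarith [htm, sub_eq_zero.1 hc]
  have hslope : slope G m t = (h t - L) / (t - m) := by
    rw [slope_def_field]
    have h1 : G t = h t := if_pos htm
    have h2 : G m = L := if_neg (lt_irrefl m)
    rw [h1, h2]
  rw [Real.dist_eq, hslope]
  have heq : (h t - L) / (t - m) - D = ((h t - L) - D * (t - m)) / (t - m) := by
    field_simp
  rw [heq, abs_div]
  have habs : |t - m| = m - t := by
    rw [abs_of_neg (by linarith)]
    ring
  rw [habs]
  have hnum' : |h t - L - D * (t - m)| ≤ ε / 2 * (m - t) := by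
    have : h t - L - D * (t - m) = -((L - D * m) - ψ t) := by
      simp only [hψ]
      ring
    rw [this, abs_neg]
    exact hnum
  rw [div_lt_iff₀ (by linarith : (0:ℝ) < m - t)]
  calc |h t - L - D * (t - m)| ≤ ε / 2 * (m - t) := hnum'
    _ < ε * (m - t) := by nlinarith
lemma riccati_local {a b q : ℝ} (hq : 0 < q) {r : ℝ → ℝ}
    (hrc : ContinuousOn r (Set.Ioo a b))
    {c : ℝ} (hc : c ∈ Set.Ioo a b) (x₀ : ℝ) :
    ∃ e, c < e ∧ e < b ∧ ∃ h : ℝ → ℝ, h c = x₀ ∧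
      ∀ t ∈ Set.Icc c e, HasDerivWithinAt h (h t ^ 2 - q * r t ^ 2) (Set.Icc c e) t := by
  set m := (c + b) / 2 with hm
  have hcm : c < m := by simp only [hm]; linarith [hc.2]
  have hmb : m < b := by simp only [hm]; linarith [hc.2]
  have hIcc : Set.Icc c m ⊆ Set.Ioo a b := fun x hx => ⟨hc.1.trans_le hx.1, lt_of_le_of_lt hx.2 hmb⟩
  obtain ⟨Rb, hRb⟩ := isCompact_Icc.exists_bound_of_continuousOn (hrc.mono hIcc)
  have hRb0 : 0 ≤ Rb := le_trans (norm_nonneg _) (hRb c ⟨le_refl _, hcm.le⟩)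
  set C := (|x₀| + 1) ^ 2 + q * Rb ^ 2 with hC
  have hCpos : 0 < C := by positivity
  set e := min m (c + 1 / C) with he
  have hce : c < e := by
    apply lt_min hcm
    have : 0 < 1 / C := by positivity
    linarith
  have heb : e < b := lt_of_le_of_lt (min_le_left _ _) hmb
  have hem : e ≤ m := min_le_left _ _
  have heC : e - c ≤ 1 / C := by
    have := min_le_right m (c + 1 / C)
    simp only [he]
    linarith [this]
  refine ⟨e, hce, heb, ?_⟩
  have hpl : IsPicardLindelof (fun t x => x ^ 2 - q * r t ^ 2) (tmin := c) (tmax := e)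
      ⟨c, le_refl _, hce.le⟩ x₀ 1 0 (Real.toNNReal C) (Real.toNNReal (2 * (|x₀| + 1))) := by
    constructor
    · intro t ht
      rw [lipschitzOnWith_iff_dist_le_mul]
      intro x hx y hy
      rw [Real.dist_eq, Real.dist_eq]
      have h2M : (Real.toNNReal (2 * (|x₀| + 1)) : ℝ) = 2 * (|x₀| + 1) :=
        Real.coe_toNNReal _ (by positivity)
      rw [h2M]
      have hxb : |x - x₀| ≤ 1 := by
        rw [Metric.mem_closedBall, Real.dist_eq] at hx
        exact hx
      have hyb : |y - x₀| ≤ 1 := by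
        rw [Metric.mem_closedBall, Real.dist_eq] at hy
        exact hy
      have hx' : |x| ≤ |x₀| + 1 := by
        calc |x| = |(x - x₀) + x₀| := by ring_nf
          _ ≤ |x - x₀| + |x₀| := abs_add_le _ _
          _ ≤ |x₀| + 1 := by linarith
      have hy' : |y| ≤ |x₀| + 1 := by
        calc |y| = |(y - x₀) + x₀| := by ring_nf
          _ ≤ |y - x₀| + |x₀| := abs_add_le _ _
          _ ≤ |x₀| + 1 := by linarith
      have : x ^ 2 - q * r t ^ 2 - (y ^ 2 - q * r t ^ 2) = (x + y) * (x - y) := by ring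
      rw [this, abs_mul]
      apply mul_le_mul_of_nonneg_right _ (abs_nonneg _)
      calc |x + y| ≤ |x| + |y| := abs_add_le _ _
        _ ≤ 2 * (|x₀| + 1) := by linarith
    · intro x _
      apply ContinuousOn.sub continuousOn_const
      apply ContinuousOn.mul continuousOn_const
      exact ((hrc.mono (fun y hy => hIcc ⟨hy.1, hy.2.trans hem⟩)).pow 2)
    · intro t ht x hx
      rw [Real.coe_toNNReal _ hCpos.le]
      have hrt : ‖r t‖ ≤ Rb := hRb t ⟨ht.1, ht.2.trans hem⟩
      rw [Real.norm_eq_abs] at hrt ⊢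
      have hxb : |x - x₀| ≤ 1 := by
        rw [Metric.mem_closedBall, Real.dist_eq] at hx
        exact hx
      have hx' : |x| ≤ |x₀| + 1 := by
        calc |x| = |(x - x₀) + x₀| := by ring_nf
          _ ≤ |x - x₀| + |x₀| := abs_add_le _ _
          _ ≤ |x₀| + 1 := by linarith
      have h1 : |x ^ 2 - q * r t ^ 2| ≤ x ^ 2 + q * r t ^ 2 := by
        rw [abs_le]
        constructor <;> nlinarith [sq_nonneg x, sq_nonneg (r t), hq.le]
      have h2 : x ^ 2 ≤ (|x₀| + 1) ^ 2 := by nlinarith [abs_nonneg x, sq_abs x]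
      have h3 : r t ^ 2 ≤ Rb ^ 2 := by nlinarith [abs_nonneg (r t), sq_abs (r t)]
      simp only [hC]
      nlinarith [hq.le]
    · have : max (e - c) (c - c) = e - c := by
        apply max_eq_left
        linarith
      simp only [Real.coe_toNNReal _ hCpos.le, NNReal.coe_one, NNReal.coe_zero, sub_zero]
      rw [this]
      calc C * (e - c) ≤ C * (1 / C) := by nlinarith
        _ = 1 := by field_simp
  obtain ⟨h, hh1, hh2⟩ := hpl.exists_eq_forall_mem_Icc_hasDerivWithinAt₀
  exact ⟨h, hh1, hh2⟩
lemma riccati_global {a b q : ℝ} (hq : 0 < q) {r : ℝ → ℝ}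
    (hrc : ContinuousOn r (Set.Ioo a b)) (hrpos : ∀ t ∈ Set.Ioo a b, 0 < r t)
    (hrmono : StrictMonoOn r (Set.Ioo a b))
    {t₀ : ℝ} (ht₀ : t₀ ∈ Set.Ioo a b) {x₀ : ℝ} (hx₀ : |x₀| ≤ Real.sqrt q * r t₀) :
    ∃ h : ℝ → ℝ, h t₀ = x₀ ∧
      ∀ t ∈ Set.Ico t₀ b, HasDerivWithinAt h (h t ^ 2 - q * r t ^ 2) (Set.Ici t₀) t := by
  classical
  set P : ℝ → (ℝ → ℝ) → Prop := fun e h => h t₀ = x₀ ∧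
    ∀ t ∈ Set.Ico t₀ e, HasDerivWithinAt h (h t ^ 2 - q * r t ^ 2) (Set.Ici t₀) t with hP
  set S : Set ℝ := {e | e ∈ Set.Ioc t₀ b ∧ ∃ h, P e h} with hS
  -- convert an Icc-solution into an Ici-solution
  have hconv : ∀ {c e : ℝ} {h : ℝ → ℝ}, c < e →
      (∀ t ∈ Set.Icc c e, HasDerivWithinAt h (h t ^ 2 - q * r t ^ 2) (Set.Icc c e) t) →
      ∀ t ∈ Set.Ico c e, HasDerivWithinAt h (h t ^ 2 - q * r t ^ 2) (Set.Ici c) t := by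
    intro c e h hce hsol t ht
    apply (hsol t ⟨ht.1, ht.2.le⟩).mono_of_mem_nhdsWithin
    have h1 : Set.Iio e ∈ nhds t := Iio_mem_nhds ht.2
    have h2 : Set.Iio e ∩ Set.Ici c ∈ nhdsWithin t (Set.Ici c) :=
      inter_mem (mem_nhdsWithin_of_mem_nhds h1) self_mem_nhdsWithin
    exact mem_of_superset h2 (fun x hx => ⟨hx.2, hx.1.le⟩)
  -- S is nonempty
  obtain ⟨e₀, he₀c, he₀b, h₀, hh₀1, hh₀2⟩ := riccati_local hq hrc ht₀ x₀
  have he₀S : e₀ ∈ S := ⟨⟨he₀c, he₀b.le⟩, h₀, hh₀1, hconv he₀c hh₀2⟩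
  have hbddS : BddAbove S := ⟨b, fun e he => he.1.2⟩
  set m := sSup S with hm
  have ht₀m : t₀ < m := lt_of_lt_of_le he₀c (le_csSup hbddS he₀S)
  have hmb : m ≤ b := csSup_le ⟨e₀, he₀S⟩ (fun e he => he.1.2)
  -- chosen solutions
  set sol : ℝ → ℝ → ℝ := fun e => if he : e ∈ S then Classical.choose he.2 else fun _ => x₀
    with hsol_def
  have hsol : ∀ e, e ∈ S → P e (sol e) := by
    intro e he
    simp only [hsol_def, dif_pos he]
    exact Classical.choose_spec he.2
  -- uniqueness of chosen solutions
  have huniq : ∀ e₁, e₁ ∈ S → ∀ e₂, e₂ ∈ S → ∀ t ∈ Set.Ico t₀ (min e₁ e₂),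
      sol e₁ t = sol e₂ t := by
    intro e₁ he₁ e₂ he₂ t ht
    have := riccati_unique_s19 hq hrc hrpos hrmono ht₀.1 he₁.1.1 he₂.1.1 he₁.1.2 he₂.1.2
      (hsol e₁ he₁).2 (hsol e₂ he₂).2
      (by rw [(hsol e₁ he₁).1]; exact hx₀)
      (by rw [(hsol e₁ he₁).1, (hsol e₂ he₂).1])
    exact this ht
  -- pick for each t an element of S above it
  have pick : ∀ t : ℝ, ∃ e, t < m → (e ∈ S ∧ t < e) := by
    intro t
    by_cases htm : t < m
    · obtain ⟨e, he, hte⟩ := exists_lt_of_lt_csSup ⟨e₀, he₀S⟩ htm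
      exact ⟨e, fun _ => ⟨he, hte⟩⟩
    · exact ⟨e₀, fun h => absurd h htm⟩
  set eof : ℝ → ℝ := fun t => (pick t).choose with heof
  set H : ℝ → ℝ := fun t => sol (eof t) t with hH
  have heof_spec : ∀ t, t < m → eof t ∈ S ∧ t < eof t := fun t ht => (pick t).choose_spec ht
  have hHeq : ∀ t, t < m → ∀ e, e ∈ S → t₀ ≤ t → t < e → H t = sol e t := by
    intro t htm e he ht₀t hte
    obtain ⟨h1, h2⟩ := heof_spec t htm
    exact huniq (eof t) h1 e he t ⟨ht₀t, lt_min h2 hte⟩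
  have hHt₀ : H t₀ = x₀ := by
    have := hHeq t₀ ht₀m e₀ he₀S (le_refl _) he₀c
    rw [this]
    exact (hsol e₀ he₀S).1
  have hHP : ∀ t ∈ Set.Ico t₀ m, HasDerivWithinAt H (H t ^ 2 - q * r t ^ 2) (Set.Ici t₀) t := by
    intro t ht
    obtain ⟨heS, hte⟩ := heof_spec t ht.2
    set e := eof t with he
    have hde : HasDerivWithinAt (sol e) ((sol e) t ^ 2 - q * r t ^ 2) (Set.Ici t₀) t :=
      (hsol e heS).2 t ⟨ht.1, hte⟩
    have hev : H =ᶠ[nhdsWithin t (Set.Ici t₀)] sol e := by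
      have h1 : Set.Iio (min e m) ∈ nhds t := Iio_mem_nhds (lt_min hte ht.2)
      filter_upwards [mem_nhdsWithin_of_mem_nhds h1, self_mem_nhdsWithin] with x hx1 hx2
      exact hHeq x (lt_of_lt_of_le hx1 (min_le_right _ _)) e heS hx2
        (lt_of_lt_of_le hx1 (min_le_left _ _))
    have hHt : H t = sol e t := hHeq t ht.2 e heS ht.1 hte
    rw [← hHt] at hde
    exact hde.congr_of_eventuallyEq hev hHt
  -- if m = b we are done
  rcases eq_or_lt_of_le hmb with hmeq | hmlt
  · refine ⟨H, hHt₀, ?_⟩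
    rw [← hmeq]
    exact hHP
  -- otherwise, extend past m: contradiction
  exfalso
  have hmab : m ∈ Set.Ioo a b := ⟨ht₀.1.trans ht₀m, hmlt⟩
  have hHbar := riccati_barrier hq hrc hrpos hrmono ht₀.1 ht₀m hmb hHP
    (by rw [hHt₀]; exact hx₀)
  have hHanti := riccati_anti hq hrc hrpos hrmono ht₀.1 ht₀m hmb hHP
    (by rw [hHt₀]; exact hx₀)
  -- limit of H at m⁻
  have hrm_pos : 0 < r m := hrpos m hmab
  have hbdd : BddBelow (H '' Set.Ioo t₀ m) := by
    refine ⟨-(Real.sqrt q * r m), ?_⟩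
    rintro y ⟨t, ht, rfl⟩
    have htab : t ∈ Set.Ioo a b := ⟨ht₀.1.trans ht.1, ht.2.trans hmlt⟩
    have h1 := (abs_le.1 (hHbar t ⟨ht.1.le, ht.2⟩)).1
    have h2 : r t ≤ r m := (hrmono htab hmab ht.2).le
    have h3 : Real.sqrt q * r t ≤ Real.sqrt q * r m :=
      mul_le_mul_of_nonneg_left h2 (Real.sqrt_nonneg q)
    linarith
  have hne : (Set.Ioo t₀ m).Nonempty := Set.nonempty_Ioo.2 ht₀m
  set L := sInf (H '' Set.Ioo t₀ m) with hL
  have hHlim : Tendsto H (nhdsWithin m (Set.Iio m)) (nhds L) :=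
    AntitoneOn.tendsto_nhdsWithin_Ioo_left hne (hHanti.mono Set.Ioo_subset_Ico_self) hbdd
  -- limit of r at m⁻
  have hrlim : Tendsto r (nhdsWithin m (Set.Iio m)) (nhds (r m)) := by
    have h1 : ContinuousWithinAt r (Set.Ioo a m) m :=
      (hrc m hmab).mono (fun x hx => ⟨hx.1, hx.2.trans hmlt⟩)
    have h2 := h1.tendsto
    rwa [nhdsWithin_Ioo_eq_nhdsLT (ht₀.1.trans ht₀m)] at h2
  -- |L| ≤ √q r m
  have hLbar : |L| ≤ Real.sqrt q * r m := by
    rw [abs_le]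
    constructor
    · apply ge_of_tendsto hHlim
      filter_upwards [Ioo_mem_nhdsLT ht₀m] with t ht
      have htab : t ∈ Set.Ioo a b := ⟨ht₀.1.trans ht.1, ht.2.trans hmlt⟩
      have h1 := (abs_le.1 (hHbar t ⟨ht.1.le, ht.2⟩)).1
      have h3 : Real.sqrt q * r t ≤ Real.sqrt q * r m :=
        mul_le_mul_of_nonneg_left (hrmono htab hmab ht.2).le (Real.sqrt_nonneg q)
      linarith
    · apply le_of_tendsto hHlim
      filter_upwards [Ioo_mem_nhdsLT ht₀m] with t ht
      have htab : t ∈ Set.Ioo a b := ⟨ht₀.1.trans ht.1, ht.2.trans hmlt⟩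
      have h1 := (abs_le.1 (hHbar t ⟨ht.1.le, ht.2⟩)).2
      have h3 : Real.sqrt q * r t ≤ Real.sqrt q * r m :=
        mul_le_mul_of_nonneg_left (hrmono htab hmab ht.2).le (Real.sqrt_nonneg q)
      linarith
  -- local solution from (m, L)
  obtain ⟨e₁, he₁m, he₁b, h₂, hh₂1, hh₂2⟩ := riccati_local hq hrc hmab L
  set G : ℝ → ℝ := fun t => if t < m then H t else h₂ t with hG
  have hGm : G m = L := by
    simp only [hG, if_neg (lt_irrefl m)]
    exact hh₂1
  set D := L ^ 2 - q * r m ^ 2 with hD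
  -- derivative of G at m
  have hGder_m : HasDerivAt G D m := by
    have hleft : HasDerivWithinAt G D (Set.Iic m) m := by
      have hφtend : Tendsto (fun t => H t ^ 2 - q * r t ^ 2) (nhdsWithin m (Set.Iio m))
          (nhds D) := by
        rw [hD]
        exact (hHlim.pow 2).sub (tendsto_const_nhds.mul (hrlim.pow 2))
      have h1 := left_deriv_ext ht₀m hHP hφtend hHlim
      apply h1.congr
      · intro x hx
        simp only [hG]
        by_cases hxm : x < m
        · rw [if_pos hxm, if_pos hxm]
        · have hxeq : x = m := le_antisymm hx (not_lt.1 hxm)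
          rw [hxeq, if_neg (lt_irrefl m), if_neg (lt_irrefl m), hh₂1]
      · rw [hGm, if_neg (lt_irrefl m)]
    have hright : HasDerivWithinAt G D (Set.Ici m) m := by
      have h1 : HasDerivWithinAt h₂ (h₂ m ^ 2 - q * r m ^ 2) (Set.Icc m e₁) m :=
        hh₂2 m ⟨le_refl _, he₁m.le⟩
      have h2 : HasDerivWithinAt h₂ (h₂ m ^ 2 - q * r m ^ 2) (Set.Ici m) m := by
        apply h1.mono_of_mem_nhdsWithin
        have hio : Set.Iio e₁ ∈ nhds m := Iio_mem_nhds he₁m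
        have h3 : Set.Iio e₁ ∩ Set.Ici m ∈ nhdsWithin m (Set.Ici m) :=
          inter_mem (mem_nhdsWithin_of_mem_nhds hio) self_mem_nhdsWithin
        exact mem_of_superset h3 (fun x hx => ⟨hx.2, hx.1.le⟩)
      rw [hh₂1] at h2
      have h4 : HasDerivWithinAt G D (Set.Ici m) m := by
        apply (show HasDerivWithinAt h₂ D (Set.Ici m) m from h2).congr
        · intro x hx
          simp only [hG, if_neg (not_lt.2 (Set.mem_Ici.1 hx))]
        · simp only [hG, if_neg (lt_irrefl m)]
      exact h4
    have := hleft.union hright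
    rwa [Set.Iic_union_Ici, hasDerivWithinAt_univ] at this
  -- define e' and show it is in S
  set e' := e₁ with he'
  have he'S : e' ∈ S := by
    refine ⟨⟨ht₀m.trans he₁m, he₁b.le⟩, G, ?_, ?_⟩
    · simp only [hG, if_pos ht₀m]
      exact hHt₀
    · intro t ht
      rcases lt_trichotomy t m with htm | htm | htm
      · -- t < m : G = H near t
        have hde := hHP t ⟨ht.1, htm⟩
        have hev : G =ᶠ[nhdsWithin t (Set.Ici t₀)] H := by
          filter_upwards [mem_nhdsWithin_of_mem_nhds (Iio_mem_nhds htm)] with x hx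
          simp only [hG, if_pos (Set.mem_Iio.1 hx)]
        have hGt : G t = H t := by simp only [hG, if_pos htm]
        rw [← hGt] at hde
        exact hde.congr_of_eventuallyEq hev hGt
      · rw [htm, hGm, ← hD]
        exact hGder_m.hasDerivWithinAt
      · -- t > m
        have h1 : HasDerivWithinAt h₂ (h₂ t ^ 2 - q * r t ^ 2) (Set.Icc m e₁) t :=
          hh₂2 t ⟨htm.le, ht.2.le⟩
        have h2 : HasDerivAt h₂ (h₂ t ^ 2 - q * r t ^ 2) t := by
          apply h1.hasDerivAt
          exact mem_of_superset (Ioo_mem_nhds htm ht.2) Set.Ioo_subset_Icc_self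
        have hev : G =ᶠ[nhds t] h₂ := by
          filter_upwards [Ioi_mem_nhds htm] with x hx
          simp only [hG, if_neg (not_lt.2 (le_of_lt (Set.mem_Ioi.1 hx)))]
        have hGt : G t = h₂ t := by simp only [hG, if_neg (not_lt.2 htm.le)]
        have h3 : HasDerivAt G (h₂ t ^ 2 - q * r t ^ 2) t := h2.congr_of_eventuallyEq hev
        have h4 : HasDerivAt G (G t ^ 2 - q * r t ^ 2) t := by rw [hGt]; exact h3
        exact h4.hasDerivWithinAt
  have : e' ≤ m := le_csSup hbddS he'S
  linarith [he₁m]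

/-- For the Riccati equation `y' - y² = -q r²` with `r` continuous, positive,
increasing on `(a,b)` and `r → +∞` at `b-` (`b < ∞`): a solution with
`f(T) ∈ [-√q r(T), √q r(T)]` is decreasing, extends to all of `[T,b)`, and satisfies
`f(t)² < q r(t)²` in a neighborhood of `b-`. -/
theorem stmt_19 (a b T q : ℝ) (ha : a < T) (hT : T < b) (hq : 0 < q)
    (r : ℝ → ℝ) (hrc : ContinuousOn r (Set.Ioo a b))
    (hrpos : ∀ t ∈ Set.Ioo a b, 0 < r t)
    (hrmono : StrictMonoOn r (Set.Ioo a b))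
    (hrtop : Tendsto r (nhdsWithin b (Set.Iio b)) atTop)
    (b' : ℝ) (hb' : b' ∈ Set.Ioc T b)
    (f : ℝ → ℝ) (hf : ∀ t ∈ Set.Ico T b', HasDerivAt f (f t ^ 2 - q * r t ^ 2) t)
    (hfT : |f T| ≤ Real.sqrt q * r T) :
    AntitoneOn f (Set.Ico T b') ∧
      (b' < b → ∃ g : ℝ → ℝ, (∀ t ∈ Set.Ico T b, HasDerivAt g (g t ^ 2 - q * r t ^ 2) t) ∧
        Set.EqOn f g (Set.Ico T b')) ∧
      (b' = b → ∀ᶠ t in nhdsWithin b (Set.Iio b), f t ^ 2 < q * r t ^ 2) := by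
  have hf' : ∀ t ∈ Set.Ico T b', HasDerivWithinAt f (f t ^ 2 - q * r t ^ 2) (Set.Ici T) t :=
    fun t ht => (hf t ht).hasDerivWithinAt
  have hbar := riccati_barrier hq hrc hrpos hrmono ha hb'.1 hb'.2 hf' hfT
  have hanti := riccati_anti hq hrc hrpos hrmono ha hb'.1 hb'.2 hf' hfT
  have hsq : 0 < Real.sqrt q := Real.sqrt_pos.2 hq
  refine ⟨hanti, ?_, ?_⟩
  · -- extension
    intro hb'b
    set t₂ := (T + b') / 2 with ht₂
    have hTt₂ : T < t₂ := by simp only [ht₂]; linarith [hb'.1]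
    have ht₂b' : t₂ < b' := by simp only [ht₂]; linarith [hb'.1]
    have ht₂ab : t₂ ∈ Set.Ioo a b := ⟨ha.trans hTt₂, ht₂b'.trans hb'b⟩
    have ht₂bar : |f t₂| ≤ Real.sqrt q * r t₂ := hbar t₂ ⟨hTt₂.le, ht₂b'⟩
    obtain ⟨h, hh1, hh2⟩ := riccati_global hq hrc hrpos hrmono ht₂ab ht₂bar
    -- uniqueness: f = h on [t₂, b')
    have huniq : Set.EqOn f h (Set.Ico t₂ (min b' b)) := by
      apply riccati_unique_s19 hq hrc hrpos hrmono ht₂ab.1 ht₂b' ht₂ab.2 hb'.2 (le_refl b)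
        (fun t ht => (hf t ⟨hTt₂.le.trans ht.1, ht.2⟩).hasDerivWithinAt)
        hh2 ht₂bar hh1.symm
    have hminb : min b' b = b' := min_eq_left hb'.2
    rw [hminb] at huniq
    set g : ℝ → ℝ := fun t => if t < b' then f t else h t with hg
    refine ⟨g, ?_, ?_⟩
    · intro t ht
      by_cases htb' : t < b'
      · have hde := hf t ⟨ht.1, htb'⟩
        have hev : g =ᶠ[nhds t] f := by
          filter_upwards [Iio_mem_nhds htb'] with x hx
          simp only [hg, if_pos (Set.mem_Iio.1 hx)]
        have hgt : g t = f t := by simp only [hg, if_pos htb']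
        have h3 : HasDerivAt g (f t ^ 2 - q * r t ^ 2) t := hde.congr_of_eventuallyEq hev
        rw [hgt]
        exact h3
      · push_neg at htb'
        have ht₂t : t₂ < t := ht₂b'.trans_le htb'
        have hde : HasDerivAt h (h t ^ 2 - q * r t ^ 2) t :=
          (hh2 t ⟨ht₂t.le, ht.2⟩).hasDerivAt (Ici_mem_nhds ht₂t)
        have hev : g =ᶠ[nhds t] h := by
          filter_upwards [Ioi_mem_nhds ht₂t] with x hx
          by_cases hxb' : x < b'
          · simp only [hg, if_pos hxb']
            exact huniq ⟨(Set.mem_Ioi.1 hx).le, hxb'⟩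
          · simp only [hg, if_neg hxb']
        have hgt : g t = h t := by simp only [hg, if_neg (not_lt.2 htb')]
        have h3 : HasDerivAt g (h t ^ 2 - q * r t ^ 2) t := hde.congr_of_eventuallyEq hev
        rw [hgt]
        exact h3
    · intro t ht
      simp only [hg, if_pos ht.2]
  · -- strict inequality near b
    intro hbb
    subst hbb
    filter_upwards [Ioo_mem_nhdsLT hT] with t ht
    have htab : t ∈ Set.Ioo a b' := ⟨ha.trans ht.1, ht.2⟩
    have htI : t ∈ Set.Ico T b' := ⟨ht.1.le, ht.2⟩
    have hbar_t := abs_le.1 (hbar t htI)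
    have hrTt : r T < r t := hrmono ⟨ha, hT⟩ htab ht.1
    have hcc : Real.sqrt q * r T < Real.sqrt q * r t := mul_lt_mul_of_pos_left hrTt hsq
    have hupper : f t < Real.sqrt q * r t := by
      have h1 : f t ≤ f T := hanti ⟨le_refl _, hb'.1⟩ htI ht.1.le
      have h2 := (abs_le.1 hfT).2
      linarith
    have hlower : -(Real.sqrt q * r t) < f t := by
      by_contra hc
      push_neg at hc
      have hft : f t = -(Real.sqrt q * r t) := le_antisymm hc hbar_t.1
      -- Gronwall-type argument: w = -f - c with c = √q r t
      set c := Real.sqrt q * r t with hc_def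
      set K := 2 * c with hK
      set w : ℝ → ℝ := fun s => -f s - c with hw
      set φ : ℝ → ℝ := fun s => w s * Real.exp (K * s) with hφ
      have hccpos : 0 < c := mul_pos hsq (hrpos t htab)
      have hφanti : AntitoneOn φ (Set.Icc T t) := by
        apply antitoneOn_of_deriv_nonpos (convex_Icc _ _)
        · apply ContinuousOn.mul
          · apply ContinuousOn.sub _ continuousOn_const
            apply ContinuousOn.neg
            intro u hu
            exact ((hf u ⟨hu.1, lt_of_le_of_lt hu.2 ht.2⟩).continuousAt).continuousWithinAt
          · exact (Real.continuous_exp.comp (continuous_const.mul continuous_id)).continuousOn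
        · intro x hx
          rw [interior_Icc] at hx
          have hxI : x ∈ Set.Ico T b' := ⟨hx.1.le, hx.2.trans ht.2⟩
          have hda : HasDerivAt f (f x ^ 2 - q * r x ^ 2) x := hf x hxI
          have hexp : HasDerivAt (fun s : ℝ => Real.exp (K * s)) (Real.exp (K * x) * K) x := by
            have h1 : HasDerivAt (fun s : ℝ => K * s) K x := by
              simpa using (hasDerivAt_id x).const_mul K
            exact h1.exp
          exact (((hda.neg).sub_const c).mul hexp).differentiableAt.differentiableWithinAt
        · intro x hx
          rw [interior_Icc] at hx
          have hxI : x ∈ Set.Ico T b' := ⟨hx.1.le, hx.2.trans ht.2⟩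
          have hxab : x ∈ Set.Ioo a b' := ⟨ha.trans_le hx.1.le, hx.2.trans ht.2⟩
          have hda : HasDerivAt f (f x ^ 2 - q * r x ^ 2) x := hf x hxI
          have hexp : HasDerivAt (fun s : ℝ => Real.exp (K * s)) (Real.exp (K * x) * K) x := by
            have h1 : HasDerivAt (fun s : ℝ => K * s) K x := by
              simpa using (hasDerivAt_id x).const_mul K
            exact h1.exp
          have hφd : HasDerivAt φ ((-(f x ^ 2 - q * r x ^ 2)) * Real.exp (K * x)
              + (-f x - c) * (Real.exp (K * x) * K)) x := ((hda.neg).sub_const c).mul hexp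
          rw [hφd.deriv]
          have hrxt : r x < r t := hrmono hxab htab hx.2
          have hrxpos : 0 < r x := hrpos x hxab
          have hcsq : c ^ 2 = q * r t ^ 2 := by
            rw [hc_def, mul_pow, Real.sq_sqrt hq.le]
          have hqx : q * r x ^ 2 ≤ c ^ 2 := by
            rw [hcsq]
            have hr2 : r x ^ 2 ≤ r t ^ 2 := by nlinarith
            exact mul_le_mul_of_nonneg_left hr2 hq.le
          have h5 : 0 < Real.exp (K * x) := Real.exp_pos _
          have hkey : -(f x ^ 2 - q * r x ^ 2) + (-f x - c) * K ≤ 0 := by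
            rw [hK]
            nlinarith [sq_nonneg (f x + c)]
          have := mul_nonpos_of_nonpos_of_nonneg hkey h5.le
          nlinarith [this]
      have h1 := hφanti ⟨le_refl _, ht.1.le⟩ ⟨ht.1.le, le_refl _⟩ ht.1.le
      have h2 : φ t = 0 := by
        simp only [hφ, hw]
        rw [hft]
        ring
      have h3 : 0 ≤ w T := by
        have h5 : 0 < Real.exp (K * T) := Real.exp_pos _
        rw [h2] at h1
        simp only [hφ] at h1
        exact (mul_nonneg_iff_of_pos_right h5).1 h1
      have h4 : f T ≤ -c := by
        simp only [hw] at h3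
        linarith
      have h6 := (abs_le.1 hfT).1
      simp only [hc_def] at h4
      linarith
    have : (Real.sqrt q * r t) ^ 2 = q * r t ^ 2 := by
      rw [mul_pow, Real.sq_sqrt hq.le]
    nlinarith
end
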